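/- arXiv:2308.14410 — 8 statements merged into one kernel-verified Lean document; each statement's English description precedes it below -/
import Mathlib

section
/- Let α > 0 and let X be a nonnegative random variable such that E[X^p] ≤ C₁/(α − p) for all p ∈ (0, α) for some constant C₁ > 0. Then there is a constant C₂ (depending only on C₁ and α) such that E[X^α · 1_{X ≤ r}] ≤ C₂ · log r for all r ≥ e. -/
open MeasureTheory Real

/-- If E[X^p] ≤ C₁/(α−p) for all p ∈ (0,α), then the truncated α-th moment satisfies
E[X^α 1_{X ≤ r}] ≤ C₂ log r for all r ≥ e, for some constant C₂ depending only on C₁ and α. -/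
theorem moment_bound_implies_truncated {Ω : Type*} [MeasurableSpace Ω] (μ : Measure Ω)
    [IsProbabilityMeasure μ]
    (X : Ω → ℝ) (hX : Measurable X) (hXnn : ∀ ω, 0 ≤ X ω) (α C₁ : ℝ) (hα : 0 < α) (hC₁ : 0 < C₁)
    (hmom : ∀ p ∈ Set.Ioo 0 α,
      ∫⁻ ω, ENNReal.ofReal (X ω ^ p) ∂μ ≤ ENNReal.ofReal (C₁ / (α - p))) :
    ∃ C₂ > 0, ∀ r ≥ Real.exp 1,
      ∫⁻ ω in {ω | X ω ≤ r}, ENNReal.ofReal (X ω ^ α) ∂μ ≤ ENNReal.ofReal (C₂ * Real.log r) := by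
  refine ⟨2 * C₁ * Real.exp (α / 2) / α, by positivity, ?_⟩
  intro r hr
  have hrpos : 0 < r := lt_of_lt_of_le (Real.exp_pos 1) hr
  have hlog : 1 ≤ Real.log r := by
    rw [← Real.log_exp 1]
    exact Real.log_le_log (Real.exp_pos 1) hr
  have hlogpos : 0 < Real.log r := lt_of_lt_of_le one_pos hlog
  set p := α - α / (2 * Real.log r) with hp
  have hdpos : 0 < α / (2 * Real.log r) := by positivity
  have hdle : α / (2 * Real.log r) ≤ α / 2 := by
    apply div_le_div_of_nonneg_left hα.le (by norm_num) (by linarith)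
  have hppos : 0 < p := by
    have : α / 2 < α := by linarith
    simp only [hp]; linarith
  have hplt : p < α := by simp only [hp]; linarith
  have hsub : α - p = α / (2 * Real.log r) := by simp [hp]
  have key : ∀ ω, X ω ≤ r → X ω ^ α ≤ Real.exp (α / 2) * X ω ^ p := by
    intro ω hωr
    rcases eq_or_lt_of_le (hXnn ω) with h0 | hpos
    · rw [← h0, Real.zero_rpow hα.ne', Real.zero_rpow hppos.ne']
      simp
    · have hsplit : X ω ^ α = X ω ^ p * X ω ^ (α - p) := by
        rw [← Real.rpow_add hpos]; ring_nf
      have hb : X ω ^ (α - p) ≤ r ^ (α - p) :=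
        Real.rpow_le_rpow hpos.le hωr (by linarith)
      have hr2 : r ^ (α - p) = Real.exp (α / 2) := by
        rw [Real.rpow_def_of_pos hrpos, hsub]
        congr 1
        field_simp
      calc X ω ^ α = X ω ^ p * X ω ^ (α - p) := hsplit
        _ ≤ X ω ^ p * Real.exp (α / 2) := by
            rw [← hr2]
            exact mul_le_mul_of_nonneg_left hb (Real.rpow_nonneg hpos.le p)
        _ = Real.exp (α / 2) * X ω ^ p := by ring
  have hmeas : Measurable fun ω => ENNReal.ofReal (Real.exp (α / 2) * X ω ^ p) := by
    fun_prop
  calc ∫⁻ ω in {ω | X ω ≤ r}, ENNReal.ofReal (X ω ^ α) ∂μ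
      ≤ ∫⁻ ω in {ω | X ω ≤ r}, ENNReal.ofReal (Real.exp (α / 2) * X ω ^ p) ∂μ :=
        setLIntegral_mono hmeas fun ω hω => ENNReal.ofReal_le_ofReal (key ω hω)
    _ ≤ ∫⁻ ω, ENNReal.ofReal (Real.exp (α / 2) * X ω ^ p) ∂μ :=
        setLIntegral_le_lintegral _ _
    _ = ENNReal.ofReal (Real.exp (α / 2)) * ∫⁻ ω, ENNReal.ofReal (X ω ^ p) ∂μ := by
        simp_rw [ENNReal.ofReal_mul (Real.exp_nonneg _)]
        rw [lintegral_const_mul _ (by fun_prop)]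
    _ ≤ ENNReal.ofReal (Real.exp (α / 2)) * ENNReal.ofReal (C₁ / (α - p)) :=
        mul_le_mul_right (hmom p ⟨hppos, hplt⟩) _
    _ = ENNReal.ofReal (2 * C₁ * Real.exp (α / 2) / α * Real.log r) := by
        rw [← ENNReal.ofReal_mul (Real.exp_nonneg _)]
        congr 1
        rw [hsub]
        field_simp
end

section
/- Let α > 0 and let X be a nonnegative random variable such that E[X^α · 1_{X ≤ r}] ≤ C₂ · log r for all r ≥ e. Then E[X^p] ≤ (C₂ + α e^α)/(α − p) for all p ∈ (0, α). -/
open MeasureTheory Real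
open Set Filter Topology
open scoped ENNReal

/-! For `x > e`, `x ^ p = (α - p) ∫_x^∞ x ^ α t ^ (p - α - 1) dt`, while `x ^ p ≤ e ^ α` for
`x ≤ e`. Integrating over `ω` with `x = X ω` and swapping the two integrals gives
`E[X ^ p] ≤ e ^ α + (α - p) ∫_e^∞ t ^ (p - α - 1) E[X ^ α; X ≤ t] dt`, and the hypothesis bounds
this by `e ^ α + (α - p) C₂ ∫_e^∞ t ^ (p - α - 1) log t dt = e ^ α + C₂ e ^ (-δ) (1 + δ) / δ`
with `δ = α - p`; finally `e ^ (-δ) (1 + δ) ≤ 1` and `δ ≤ α`. -/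

theorem lintegral_Ioi_ofReal_of_hasDerivAt_of_nonneg {g g' : ℝ → ℝ} {a l : ℝ}
    (hderiv : ∀ x ∈ Ici a, HasDerivAt g (g' x) x) (hg' : ∀ x ∈ Ioi a, 0 ≤ g' x)
    (hg : Tendsto g atTop (𝓝 l)) :
    ∫⁻ x in Ioi a, ENNReal.ofReal (g' x) = ENNReal.ofReal (l - g a) := by
  rw [← ofReal_integral_eq_lintegral_ofReal (integrableOn_Ioi_deriv_of_nonneg' hderiv hg' hg)
    ((ae_restrict_mem measurableSet_Ioi).mono hg'),
    integral_Ioi_of_hasDerivAt_of_nonneg' hderiv hg' hg]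

theorem lintegral_Ioi_rpow_of_lt {a c : ℝ} (ha : a < -1) (hc : 0 < c) :
    ∫⁻ t in Ioi c, ENNReal.ofReal (t ^ a) = ENNReal.ofReal (-c ^ (a + 1) / (a + 1)) := by
  rw [← ofReal_integral_eq_lintegral_ofReal (integrableOn_Ioi_rpow_of_lt ha hc)
    ((ae_restrict_mem measurableSet_Ioi).mono fun t ht => rpow_nonneg (hc.trans ht).le a),
    integral_Ioi_rpow_of_lt ha hc]

theorem lintegral_Ioi_exp_one_rpow_mul_log {δ : ℝ} (hδ : 0 < δ) :
    ∫⁻ t in Ioi (exp 1), ENNReal.ofReal (t ^ (-δ - 1) * log t)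
      = ENNReal.ofReal (exp (-δ) * (δ + 1) / δ ^ 2) := by
  set G : ℝ → ℝ := fun t => -(t ^ (-δ) * log t / δ) - t ^ (-δ) / δ ^ 2
  have hderiv : ∀ t ∈ Ici (exp 1), HasDerivAt G (t ^ (-δ - 1) * log t) t := by
    intro t ht
    have ht0 : 0 < t := (exp_pos 1).trans_le ht
    have hpow : HasDerivAt (fun s : ℝ => s ^ (-δ)) (-δ * t ^ (-δ - 1)) t := by
      simpa using hasDerivAt_rpow_const (p := -δ) (Or.inl ht0.ne')
    refine (((hpow.mul (hasDerivAt_log ht0.ne')).div_const δ).neg.sub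
      (hpow.div_const (δ ^ 2))).congr_deriv ?_
    rw [rpow_sub ht0, rpow_one]
    field_simp
    ring
  have hnonneg : ∀ t ∈ Ioi (exp 1), 0 ≤ t ^ (-δ - 1) * log t := fun t ht =>
    mul_nonneg (rpow_nonneg ((exp_pos 1).trans ht).le _)
      (log_nonneg (one_le_exp zero_le_one |>.trans ht.le))
  have hlim : Tendsto G atTop (𝓝 0) := by
    have hlog : Tendsto (fun t : ℝ => t ^ (-δ) * log t) atTop (𝓝 0) := by
      refine (isLittleO_log_rpow_atTop hδ).tendsto_div_nhds_zero.congr' ?_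
      filter_upwards [eventually_gt_atTop 0] with t ht
      rw [rpow_neg ht.le, div_eq_inv_mul]
    simpa [G] using (hlog.div_const δ).neg.sub ((tendsto_rpow_neg_atTop hδ).div_const (δ ^ 2))
  rw [lintegral_Ioi_ofReal_of_hasDerivAt_of_nonneg hderiv hnonneg hlim]
  congr 1
  simp only [G, exp_one_rpow, log_exp]
  field_simp
  ring

theorem exp_neg_mul_add_one_le_one (x : ℝ) : exp (-x) * (x + 1) ≤ 1 := by
  rw [exp_neg, inv_mul_le_iff₀ (exp_pos x), mul_one]
  exact add_one_le_exp x

theorem ofReal_sub_mul_lintegral_Ioi_rpow {x p α : ℝ} (hx : 0 < x) (hpα : p < α) :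
    ENNReal.ofReal (α - p) *
        ∫⁻ t in Ioi x, ENNReal.ofReal (x ^ α) * ENNReal.ofReal (t ^ (p - α - 1))
      = ENNReal.ofReal (x ^ p) := by
  rw [lintegral_const_mul' _ _ ENNReal.ofReal_ne_top, lintegral_Ioi_rpow_of_lt (by linarith) hx,
    ← ENNReal.ofReal_mul (rpow_nonneg hx.le α), ← ENNReal.ofReal_mul (by linarith)]
  congr 1
  have hpow : x ^ α * x ^ (p - α) = x ^ p := by rw [← rpow_add hx, add_sub_cancel]
  rw [show p - α - 1 + 1 = p - α by ring, ← hpow]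
  field_simp [show p - α ≠ 0 by linarith]
  ring

theorem ofReal_rpow_le_add_lintegral_Ioi {x a p α : ℝ} (hx : 0 ≤ x) (ha : 0 ≤ a) (hp : 0 ≤ p)
    (hpα : p < α) :
    ENNReal.ofReal (x ^ p) ≤ ENNReal.ofReal (a ^ p) + ENNReal.ofReal (α - p) *
      ∫⁻ t in Ioi a, (Ici x).indicator
        (fun t => ENNReal.ofReal (x ^ α) * ENNReal.ofReal (t ^ (p - α - 1))) t := by
  rcases le_or_gt x a with hxa | hax
  · exact le_trans (ENNReal.ofReal_le_ofReal (rpow_le_rpow hx hxa hp)) le_self_add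
  · refine le_trans (le_of_eq ?_) le_add_self
    rw [lintegral_indicator measurableSet_Ici, Measure.restrict_restrict measurableSet_Ici,
      inter_eq_left.mpr (Ici_subset_Ioi.mpr hax), setLIntegral_congr Ioi_ae_eq_Ici.symm,
      ofReal_sub_mul_lintegral_Ioi_rpow (ha.trans_lt hax) hpα]

theorem lintegral_setLIntegral_indicator_Ici {Ω : Type*} [MeasurableSpace Ω] {μ : Measure Ω}
    [SFinite μ] {X : Ω → ℝ} (hX : Measurable X) {g w : ℝ → ℝ≥0∞} (hg : Measurable g)
    (hw : Measurable w) (s : Set ℝ) :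
    ∫⁻ ω, ∫⁻ t in s, (Ici (X ω)).indicator (fun t => g (X ω) * w t) t ∂volume ∂μ
      = ∫⁻ t in s, (∫⁻ ω in {ω | X ω ≤ t}, g (X ω) ∂μ) * w t ∂volume := by
  have hmeas : Measurable
      (Function.uncurry fun ω t => (Ici (X ω)).indicator (fun t => g (X ω) * w t) t) :=
    show Measurable ({q : Ω × ℝ | X q.1 ≤ q.2}.indicator fun q => g (X q.1) * w q.2) from
      ((hg.comp (hX.comp measurable_fst)).mul (hw.comp measurable_snd)).indicator
        (measurableSet_le (hX.comp measurable_fst) measurable_snd)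
  rw [lintegral_lintegral_swap hmeas.aemeasurable]
  congr with t
  calc ∫⁻ ω, (Ici (X ω)).indicator (fun t => g (X ω) * w t) t ∂μ
      = ∫⁻ ω, {ω | X ω ≤ t}.indicator (fun ω => g (X ω) * w t) ω ∂μ := rfl
    _ = ∫⁻ ω in {ω | X ω ≤ t}, g (X ω) * w t ∂μ :=
      lintegral_indicator (measurableSet_le hX measurable_const) _
    _ = _ := lintegral_mul_const _ (hg.comp hX)

theorem lintegral_ofReal_rpow_le_of_truncated {Ω : Type*} [MeasurableSpace Ω] {μ : Measure Ω}
    [SFinite μ] {X : Ω → ℝ} (hX : Measurable X) (hXnn : ∀ ω, 0 ≤ X ω) {a p α : ℝ} (ha : 0 ≤ a)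
    (hp : 0 ≤ p) (hpα : p < α) :
    ∫⁻ ω, ENNReal.ofReal (X ω ^ p) ∂μ ≤ ENNReal.ofReal (a ^ p) * μ univ +
      ENNReal.ofReal (α - p) * ∫⁻ t in Ioi a,
        (∫⁻ ω in {ω | X ω ≤ t}, ENNReal.ofReal (X ω ^ α) ∂μ) * ENNReal.ofReal (t ^ (p - α - 1)) :=
  calc ∫⁻ ω, ENNReal.ofReal (X ω ^ p) ∂μ
      ≤ ∫⁻ ω, (ENNReal.ofReal (a ^ p) + ENNReal.ofReal (α - p) * ∫⁻ t in Ioi a,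
          (Ici (X ω)).indicator
            (fun t => ENNReal.ofReal (X ω ^ α) * ENNReal.ofReal (t ^ (p - α - 1))) t) ∂μ :=
        lintegral_mono fun ω => ofReal_rpow_le_add_lintegral_Ioi (hXnn ω) ha hp hpα
    _ = _ := by
        rw [lintegral_add_left measurable_const, lintegral_const,
          lintegral_const_mul' _ _ ENNReal.ofReal_ne_top,
          lintegral_setLIntegral_indicator_Ici hX (g := fun x => ENNReal.ofReal (x ^ α))
            (w := fun t => ENNReal.ofReal (t ^ (p - α - 1))) (by fun_prop) (by fun_prop)]

theorem truncated_implies_moment_bound_general {Ω : Type*} [MeasurableSpace Ω] (μ : Measure Ω)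
    [IsProbabilityMeasure μ]
    (X : Ω → ℝ) (hX : Measurable X) (hXnn : ∀ ω, 0 ≤ X ω) (α C₂ : ℝ) (hC₂ : 0 < C₂)
    (htrunc : ∀ r ≥ Real.exp 1,
      ∫⁻ ω in {ω | X ω ≤ r}, ENNReal.ofReal (X ω ^ α) ∂μ ≤ ENNReal.ofReal (C₂ * Real.log r)) :
    ∀ p ∈ Set.Ioo 0 α,
      ∫⁻ ω, ENNReal.ofReal (X ω ^ p) ∂μ
        ≤ ENNReal.ofReal ((C₂ + α * Real.exp α) / (α - p)) := by
  rintro p ⟨hp, hpα⟩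
  set δ := α - p
  have hδ : 0 < δ := sub_pos.mpr hpα
  have hweight : ∀ t ∈ Ioi (exp 1),
      (∫⁻ ω in {ω | X ω ≤ t}, ENNReal.ofReal (X ω ^ α) ∂μ) * ENNReal.ofReal (t ^ (p - α - 1))
        ≤ ENNReal.ofReal C₂ * ENNReal.ofReal (t ^ (-δ - 1) * log t) := fun t ht =>
    calc _ ≤ ENNReal.ofReal (C₂ * log t) * ENNReal.ofReal (t ^ (p - α - 1)) := by
          gcongr; exact htrunc t ht.le
      _ = _ := by
          rw [← ENNReal.ofReal_mul' (rpow_nonneg ((exp_pos 1).trans ht).le _),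
            ← ENNReal.ofReal_mul hC₂.le, show -δ - 1 = p - α - 1 by ring]
          congr 1
          ring
  calc ∫⁻ ω, ENNReal.ofReal (X ω ^ p) ∂μ
      ≤ ENNReal.ofReal (exp 1 ^ p) * μ univ + ENNReal.ofReal δ * ∫⁻ t in Ioi (exp 1),
          (∫⁻ ω in {ω | X ω ≤ t}, ENNReal.ofReal (X ω ^ α) ∂μ) * ENNReal.ofReal (t ^ (p - α - 1)) :=
        lintegral_ofReal_rpow_le_of_truncated hX hXnn (exp_pos 1).le hp.le hpα
    _ ≤ ENNReal.ofReal (exp α) + ENNReal.ofReal δ * (ENNReal.ofReal C₂ *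
          ENNReal.ofReal (exp (-δ) * (δ + 1) / δ ^ 2)) := by
        rw [measure_univ, mul_one, exp_one_rpow, ← lintegral_Ioi_exp_one_rpow_mul_log hδ,
          ← lintegral_const_mul' (ENNReal.ofReal C₂) _ ENNReal.ofReal_ne_top]
        gcongr ENNReal.ofReal ?_ + ENNReal.ofReal δ * ?_
        · exact exp_le_exp.mpr hpα.le
        · exact setLIntegral_mono (by fun_prop) hweight
    _ ≤ ENNReal.ofReal ((C₂ + α * exp α) / δ) := by
        rw [← ENNReal.ofReal_mul hC₂.le, ← ENNReal.ofReal_mul hδ.le,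
          ← ENNReal.ofReal_add (exp_pos α).le (by positivity)]
        refine ENNReal.ofReal_le_ofReal ?_
        rw [le_div_iff₀ hδ]
        calc (exp α + δ * (C₂ * (exp (-δ) * (δ + 1) / δ ^ 2))) * δ
            = δ * exp α + C₂ * (exp (-δ) * (δ + 1)) := by field_simp
          _ ≤ α * exp α + C₂ * 1 := by gcongr; exacts [by linarith, exp_neg_mul_add_one_le_one δ]
          _ = C₂ + α * exp α := by ring

/-- If E[X^α 1_{X ≤ r}] ≤ C₂ log r for all r ≥ e, then
E[X^p] ≤ (C₂ + α e^α)/(α−p) for all p ∈ (0,α). -/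
theorem truncated_implies_moment_bound {Ω : Type*} [MeasurableSpace Ω] (μ : Measure Ω)
    [IsProbabilityMeasure μ]
    (X : Ω → ℝ) (hX : Measurable X) (hXnn : ∀ ω, 0 ≤ X ω) (α C₂ : ℝ) (hα : 0 < α) (hC₂ : 0 < C₂)
    (htrunc : ∀ r ≥ Real.exp 1,
      ∫⁻ ω in {ω | X ω ≤ r}, ENNReal.ofReal (X ω ^ α) ∂μ ≤ ENNReal.ofReal (C₂ * Real.log r)) :
    ∀ p ∈ Set.Ioo 0 α,
      ∫⁻ ω, ENNReal.ofReal (X ω ^ p) ∂μ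
        ≤ ENNReal.ofReal ((C₂ + α * Real.exp α) / (α - p)) :=
  truncated_implies_moment_bound_general μ X hX hXnn α C₂ hC₂ htrunc
end

section
/- Let α > 0 and let X be a nonnegative random variable such that E[X^α · 1_{X ≤ r}] ≤ C₂ · log r for all r ≥ e. Then for all s ∈ (0, e^{-1}], E[X^α · exp(−sX)] ≤ (e^α + C₂(e^{-1} + 1)) · |log s|. -/
set_option maxHeartbeats 1000000


open MeasureTheory Real

open scoped ENNReal


noncomputable def bb : ℕ → ℝ
  | 0 => 0
  | 1 => Real.log 2
  | 2 => Real.log 2 + 1/2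
  | 3 => 2 * Real.log 2
  | (n+4) => (n : ℝ) + 2

lemma log_le_self_nat (k : ℕ) : Real.log ((k : ℝ) + 1) ≤ (k : ℝ) := by
  rw [Real.log_le_iff_le_exp (by positivity)]
  have := Real.add_one_le_exp (k : ℝ); linarith

lemma log_le_bb (k : ℕ) : Real.log ((k : ℝ) + 1) ≤ bb k := by
  have he : (2.7182818283 : ℝ) < Real.exp 1 := Real.exp_one_gt_d9
  match k with
  | 0 => simp [bb]
  | 1 => norm_num [bb]
  | 2 =>
    have : ((2:ℕ):ℝ) + 1 = 3 := by norm_num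
    rw [this]
    show Real.log 3 ≤ Real.log 2 + 1/2
    rw [Real.log_le_iff_le_exp (by norm_num)]
    rw [Real.exp_add]
    have h2 : Real.exp (Real.log 2) = 2 := Real.exp_log (by norm_num)
    rw [h2]
    have hhalf : (3:ℝ)/2 ≤ Real.exp (1/2) := by
      have hsq : Real.exp (1/2) * Real.exp (1/2) = Real.exp 1 := by
        rw [← Real.exp_add]; norm_num
      nlinarith [Real.exp_pos (1/2 : ℝ)]
    linarith
  | 3 =>
    have : ((3:ℕ):ℝ) + 1 = 2^(2:ℕ) := by norm_num
    rw [this, Real.log_pow]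
    show ((2:ℕ):ℝ) * Real.log 2 ≤ bb 3
    norm_num [bb]
  | (n+4) =>
    show Real.log (((n+4:ℕ):ℝ) + 1) ≤ (n:ℝ) + 2
    push_cast
    rw [Real.log_le_iff_le_exp (by positivity)]
    have h1 : Real.exp ((n:ℝ)+2) = Real.exp (n:ℝ) * Real.exp 2 := by
      rw [← Real.exp_add]
    have h2 : (n:ℝ) + 1 ≤ Real.exp (n:ℝ) := by
      have := Real.add_one_le_exp (n:ℝ); linarith
    have h3 : (7:ℝ) ≤ Real.exp 2 := by
      have : Real.exp 2 = Real.exp 1 * Real.exp 1 := by rw [← Real.exp_add]; norm_num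
      nlinarith
    have h4 : ((n:ℝ)+1) * 7 ≤ Real.exp (n:ℝ) * Real.exp 2 := by
      apply mul_le_mul h2 h3 (by norm_num) (le_of_lt (Real.exp_pos _))
    rw [h1]; push_cast; nlinarith [(Nat.cast_nonneg n : (0:ℝ) ≤ n)]


lemma key_T : ∑' k : ℕ, Real.exp (-1) ^ k * Real.log ((k : ℝ) + 1)
    ≤ Real.exp (-1) / (1 - Real.exp (-1)) := by
  set q := Real.exp (-1) with hqdef
  have hq0 : 0 < q := Real.exp_pos _
  have hqlo : 0.36787944 < q := by have := Real.exp_neg_one_gt_d9; norm_num at this ⊢; linarith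
  have hqhi : q < 0.3678795 := by have := Real.exp_neg_one_lt_d9; norm_num at this ⊢; linarith
  have hq1 : q < 1 := by linarith
  have hnq : ‖q‖ < 1 := by rw [Real.norm_eq_abs, abs_of_pos hq0]; exact hq1
  have hl2lo : (0:ℝ) ≤ Real.log 2 := Real.log_nonneg (by norm_num)
  have hl2hi : Real.log 2 < 0.6931471808 := Real.log_two_lt_d9
  -- summability facts
  have hsum_geo : Summable (fun k : ℕ => q ^ k) := summable_geometric_of_lt_one hq0.le hq1
  have hsum_nq : Summable (fun k : ℕ => (k : ℝ) * q ^ k) := by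
    have := summable_pow_mul_geometric_of_norm_lt_one (R := ℝ) 1 hnq
    simpa using this
  have hbnd : ∀ k : ℕ, q ^ k * Real.log ((k : ℝ) + 1) ≤ (k : ℝ) * q ^ k := by
    intro k
    have h1 : q ^ k * Real.log ((k : ℝ) + 1) ≤ q ^ k * (k : ℝ) :=
      mul_le_mul_of_nonneg_left (log_le_self_nat k) (by positivity)
    linarith [h1]
  have hnonnegT : ∀ k : ℕ, 0 ≤ q ^ k * Real.log ((k : ℝ) + 1) := by
    intro k
    have : (0:ℝ) ≤ Real.log ((k : ℝ) + 1) := Real.log_nonneg (by have : (0:ℝ) ≤ (k:ℝ) := Nat.cast_nonneg k; linarith)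
    positivity
  have hsum_T : Summable (fun k : ℕ => q ^ k * Real.log ((k : ℝ) + 1)) :=
    Summable.of_nonneg_of_le hnonnegT hbnd hsum_nq
  have hbb_le : ∀ k : ℕ, bb k ≤ (k : ℝ) + 2 := by
    intro k
    have hl21 : Real.log 2 ≤ 1 := by linarith
    match k with
    | 0 => norm_num [bb]
    | 1 => norm_num [bb]; linarith
    | 2 => norm_num [bb]; linarith
    | 3 => norm_num [bb]; linarith
    | (n+4) => show (n:ℝ) + 2 ≤ ((n+4:ℕ):ℝ) + 2; push_cast; linarith
  have hbb_nonneg : ∀ k : ℕ, 0 ≤ bb k := by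
    intro k
    match k with
    | 0 => norm_num [bb]
    | 1 => norm_num [bb]; linarith
    | 2 => norm_num [bb]; linarith
    | 3 => norm_num [bb]; linarith
    | (n+4) => show (0:ℝ) ≤ (n:ℝ) + 2; positivity
  have hsum_u : Summable (fun k : ℕ => q ^ k * bb k) := by
    refine Summable.of_nonneg_of_le (f := fun k : ℕ => (k : ℝ) * q ^ k + 2 * q ^ k)
      (fun k => by have := hbb_nonneg k; positivity) (fun k => ?_)
      (hsum_nq.add (hsum_geo.mul_left 2))
    have := mul_le_mul_of_nonneg_left (hbb_le k) (pow_nonneg hq0.le k)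
    show q ^ k * bb k ≤ (k:ℝ) * q ^ k + 2 * q ^ k
    nlinarith [pow_nonneg hq0.le k]
  have hTU : (∑' k : ℕ, q ^ k * Real.log ((k : ℝ) + 1)) ≤ ∑' k : ℕ, q ^ k * bb k :=
    Summable.tsum_le_tsum (fun k => mul_le_mul_of_nonneg_left (log_le_bb k) (pow_nonneg hq0.le k))
      hsum_T hsum_u
  have htail : ∑' i : ℕ, q ^ (i+4) * bb (i+4)
      = q^4 * (q/(1-q)^2 + 2 * (1-q)⁻¹) := by
    have h1 : ∀ i : ℕ, q ^ (i+4) * bb (i+4) = q^4 * ((i:ℝ) * q^i + 2 * q^i) := by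
      intro i
      show q ^ (i+4) * ((i:ℝ) + 2) = _
      rw [pow_add]; ring
    rw [tsum_congr h1, tsum_mul_left,
      Summable.tsum_add hsum_nq (hsum_geo.mul_left 2),
      tsum_coe_mul_geometric_of_norm_lt_one hnq, tsum_mul_left,
      tsum_geometric_of_lt_one hq0.le hq1]
  have hsplit := Summable.sum_add_tsum_nat_add 4 hsum_u
  have hhead : ∑ i ∈ Finset.range 4, q^i * bb i
      = q * Real.log 2 + q^2*(Real.log 2 + 1/2) + q^3*(2*Real.log 2) := by
    simp [Finset.sum_range_succ, bb]
  have h1q : (0.6321205:ℝ) < 1 - q := by linarith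
  have hA : q/(1-q)^2 ≤ 0.921 := by
    rw [div_le_iff₀ (by nlinarith)]
    nlinarith
  have hB : 2*(1-q)⁻¹ ≤ 3.165 := by
    have h2 : (1-q)⁻¹ ≤ (0.6321205:ℝ)⁻¹ := by
      apply inv_anti₀ (by norm_num) (by linarith)
    rw [show (3.165:ℝ) = 2 * 1.5825 by norm_num]
    have : ((0.6321205:ℝ))⁻¹ ≤ 1.5825 := by norm_num
    linarith
  have hC : (0.5819:ℝ) ≤ q/(1-q) := by
    rw [le_div_iff₀ (by linarith)]
    nlinarith
  have hqq : q * q ≤ 0.3678795 * 0.3678795 := mul_self_le_mul_self hq0.le hqhi.le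
  have hq2 : q^2 ≤ 0.13533533 := by rw [pow_two]; linarith
  have hq2nn : (0:ℝ) ≤ q^2 := by positivity
  have hq3 : q^3 ≤ 0.0497912 := by
    have h := mul_le_mul hq2 hqhi.le hq0.le (by norm_num : (0:ℝ) ≤ 0.13533533)
    calc q^3 = q^2 * q := by ring
      _ ≤ 0.13533533 * 0.3678795 := h
      _ ≤ 0.0497912 := by norm_num
  have hq4 : q^4 ≤ 0.0183177 := by
    have h := mul_le_mul hq3 hqhi.le hq0.le (by norm_num : (0:ℝ) ≤ 0.0497912)
    calc q^4 = q^3 * q := by ring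
      _ ≤ 0.0497912 * 0.3678795 := h
      _ ≤ 0.0183177 := by norm_num
  have ht1 : q * Real.log 2 ≤ 0.2550 := by
    have h := mul_le_mul hqhi.le hl2hi.le hl2lo (by norm_num : (0:ℝ) ≤ 0.3678795)
    calc q * Real.log 2 ≤ 0.3678795 * 0.6931471808 := h
      _ ≤ 0.2550 := by norm_num
  have ht2 : q^2 * (Real.log 2 + 1/2) ≤ 0.16148 := by
    have h := mul_le_mul hq2 (by linarith : Real.log 2 + 1/2 ≤ 1.1931472)
      (by linarith : (0:ℝ) ≤ Real.log 2 + 1/2) (by norm_num : (0:ℝ) ≤ 0.13533533)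
    calc q^2 * (Real.log 2 + 1/2) ≤ 0.13533533 * 1.1931472 := h
      _ ≤ 0.16148 := by norm_num
  have ht3 : q^3 * (2 * Real.log 2) ≤ 0.069026 := by
    have h := mul_le_mul hq3 (by linarith : 2 * Real.log 2 ≤ 1.3862944)
      (by linarith : (0:ℝ) ≤ 2 * Real.log 2) (by norm_num : (0:ℝ) ≤ 0.0497912)
    calc q^3 * (2 * Real.log 2) ≤ 0.0497912 * 1.3862944 := h
      _ ≤ 0.069026 := by norm_num
  have hE : q/(1-q)^2 + 2 * (1-q)⁻¹ ≤ 4.086 := by linarith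
  have hEpos : (0:ℝ) ≤ q/(1-q)^2 + 2 * (1-q)⁻¹ := by positivity
  have ht4 : q^4 * (q/(1-q)^2 + 2 * (1-q)⁻¹) ≤ 0.074847 := by
    have h := mul_le_mul hq4 hE hEpos (by norm_num : (0:ℝ) ≤ 0.0183177)
    calc q^4 * (q/(1-q)^2 + 2 * (1-q)⁻¹) ≤ 0.0183177 * 4.086 := h
      _ ≤ 0.074847 := by norm_num
  calc (∑' k : ℕ, q ^ k * Real.log ((k : ℝ) + 1))
      ≤ ∑' k : ℕ, q ^ k * bb k := hTU
    _ = (∑ i ∈ Finset.range 4, q^i * bb i) + ∑' i : ℕ, q ^ (i+4) * bb (i+4) := hsplit.symm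
    _ ≤ 0.5819 := by rw [hhead, htail]; linarith
    _ ≤ q/(1-q) := hC


lemma exp_neg_nat (k : ℕ) : Real.exp (-(k:ℝ)) = Real.exp (-1) ^ k := by
  rw [← Real.exp_nat_mul]; norm_num

lemma sum_a (C₂ L : ℝ) (hC₂ : 0 < C₂) (hL : 1 ≤ L) :
    Summable (fun k : ℕ =>
      (Real.exp (-(k:ℝ)) * (1 - Real.exp (-1))) * (C₂ * (Real.log ((k:ℝ)+1) + L)))
    ∧ (∑' k : ℕ,
        (Real.exp (-(k:ℝ)) * (1 - Real.exp (-1))) * (C₂ * (Real.log ((k:ℝ)+1) + L)))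
      ≤ C₂ * (Real.exp (-1) + 1) * L := by
  set q := Real.exp (-1) with hqdef
  have hq0 : 0 < q := Real.exp_pos _
  have hqhi : q < 0.3678795 := by
    have := Real.exp_neg_one_lt_d9; rw [hqdef]; linarith
  have hq1 : q < 1 := by linarith
  have hnq : ‖q‖ < 1 := by rw [Real.norm_eq_abs, abs_of_pos hq0]; exact hq1
  have hsum_geo : Summable (fun k : ℕ => q ^ k) := summable_geometric_of_lt_one hq0.le hq1
  have hsum_nq : Summable (fun k : ℕ => (k : ℝ) * q ^ k) := by
    have := summable_pow_mul_geometric_of_norm_lt_one (R := ℝ) 1 hnq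
    simpa using this
  have hlog_le : ∀ k : ℕ, Real.log ((k : ℝ) + 1) ≤ (k : ℝ) := by
    intro k
    rw [Real.log_le_iff_le_exp (by positivity)]
    have := Real.add_one_le_exp (k : ℝ); linarith
  have hlognn : ∀ k : ℕ, 0 ≤ Real.log ((k : ℝ) + 1) := fun k =>
    Real.log_nonneg (by have : (0:ℝ) ≤ (k:ℝ) := Nat.cast_nonneg k; linarith)
  have hsum_T : Summable (fun k : ℕ => q ^ k * Real.log ((k : ℝ) + 1)) := by
    refine Summable.of_nonneg_of_le (f := fun k : ℕ => (k:ℝ) * q ^ k)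
      (fun k => by have := hlognn k; positivity) (fun k => ?_) hsum_nq
    have := mul_le_mul_of_nonneg_left (hlog_le k) (pow_nonneg hq0.le k)
    show q ^ k * Real.log ((k : ℝ) + 1) ≤ (k:ℝ) * q ^ k
    nlinarith
  have hfun : ∀ k : ℕ, (Real.exp (-(k:ℝ)) * (1 - q)) * (C₂ * (Real.log ((k:ℝ)+1) + L))
      = (C₂ * (1 - q)) * (q ^ k * Real.log ((k:ℝ)+1)) + (C₂ * (1 - q) * L) * q ^ k := by
    intro k; rw [exp_neg_nat k, ← hqdef]; ring
  have hsum1 : Summable (fun k : ℕ => (C₂ * (1 - q)) * (q ^ k * Real.log ((k:ℝ)+1))) :=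
    hsum_T.mul_left _
  have hsum2 : Summable (fun k : ℕ => (C₂ * (1 - q) * L) * q ^ k) := hsum_geo.mul_left _
  have hsumA : Summable (fun k : ℕ =>
      (Real.exp (-(k:ℝ)) * (1 - q)) * (C₂ * (Real.log ((k:ℝ)+1) + L))) := by
    rw [funext hfun]; exact hsum1.add hsum2
  refine ⟨hsumA, ?_⟩
  rw [funext hfun, Summable.tsum_add hsum1 hsum2, tsum_mul_left, tsum_mul_left,
    tsum_geometric_of_lt_one hq0.le hq1]
  have hTle : (∑' k : ℕ, q ^ k * Real.log ((k : ℝ) + 1)) ≤ q / (1 - q) := key_T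
  have h1q : (0:ℝ) < 1 - q := by linarith
  have hTnn : 0 ≤ ∑' k : ℕ, q ^ k * Real.log ((k : ℝ) + 1) :=
    tsum_nonneg (fun k => by have := hlognn k; positivity)
  have e1 : C₂ * (1 - q) * (∑' k : ℕ, q ^ k * Real.log ((k : ℝ) + 1)) ≤ C₂ * q := by
    have h := mul_le_mul_of_nonneg_left hTle (by positivity : (0:ℝ) ≤ C₂ * (1 - q))
    calc C₂ * (1 - q) * (∑' k : ℕ, q ^ k * Real.log ((k : ℝ) + 1))
        ≤ C₂ * (1 - q) * (q / (1 - q)) := h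
      _ = C₂ * q := by field_simp
  have e2 : C₂ * (1 - q) * L * (1 - q)⁻¹ = C₂ * L := by field_simp
  have e3 : C₂ * q ≤ C₂ * q * L := by nlinarith [mul_nonneg (mul_nonneg hC₂.le hq0.le) (by linarith : (0:ℝ) ≤ L - 1)]
  rw [e2]
  have e4 : C₂ * (q + 1) * L = C₂ * q * L + C₂ * L := by ring
  linarith

/-- If E[X^α 1_{X ≤ r}] ≤ C₂ log r for all r ≥ e, then for all s ∈ (0, e⁻¹],
E[X^α exp(−sX)] ≤ (e^α + C₂(e⁻¹ + 1)) |log s|. -/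
theorem truncated_implies_exp_moment {Ω : Type*} [MeasurableSpace Ω] (μ : Measure Ω)
    [IsProbabilityMeasure μ]
    (X : Ω → ℝ) (hX : Measurable X) (hXnn : ∀ ω, 0 ≤ X ω) (α C₂ : ℝ) (hα : 0 < α) (hC₂ : 0 < C₂)
    (htrunc : ∀ r ≥ Real.exp 1,
      ∫⁻ ω in {ω | X ω ≤ r}, ENNReal.ofReal (X ω ^ α) ∂μ ≤ ENNReal.ofReal (C₂ * Real.log r)) :
    ∀ s ∈ Set.Ioc (0 : ℝ) (Real.exp 1)⁻¹,
      ∫⁻ ω, ENNReal.ofReal (X ω ^ α * Real.exp (-(s * X ω))) ∂μ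
        ≤ ENNReal.ofReal ((Real.exp α + C₂ * ((Real.exp 1)⁻¹ + 1)) * |Real.log s|) := by
  intro s hs
  obtain ⟨hs0, hse⟩ := hs
  have he0 : (0:ℝ) < Real.exp 1 := Real.exp_pos 1
  have hqe : Real.exp (-1) = (Real.exp 1)⁻¹ := Real.exp_neg 1
  have hq0 : (0:ℝ) < Real.exp (-1) := Real.exp_pos _
  have hq1 : Real.exp (-1) < 1 := by
    have := Real.exp_neg_one_lt_d9; linarith
  have hlogs : Real.log s ≤ -1 := by
    have h1 : Real.log s ≤ Real.log (Real.exp (-1)) := by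
      apply Real.log_le_log hs0
      rw [hqe]; exact hse
    rwa [Real.log_exp] at h1
  set L : ℝ := -Real.log s with hLdef
  have hL1 : 1 ≤ L := by rw [hLdef]; linarith
  have habs : |Real.log s| = L := abs_of_neg (by linarith)
  have hsinv : Real.exp 1 ≤ 1/s := by
    rw [le_div_iff₀ hs0]
    calc Real.exp 1 * s ≤ Real.exp 1 * (Real.exp 1)⁻¹ :=
          mul_le_mul_of_nonneg_left hse he0.le
      _ = 1 := mul_inv_cancel₀ (ne_of_gt he0)
  set c : ℕ → ℝ := fun k => Real.exp (-(k:ℝ)) * (1 - Real.exp (-1)) with hcdef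
  have hc_nonneg : ∀ k, 0 ≤ c k := fun k => by
    show 0 ≤ Real.exp (-(k:ℝ)) * (1 - Real.exp (-1))
    have := Real.exp_pos (-(k:ℝ)); nlinarith
  set F : ℕ → Ω → ℝ≥0∞ := fun k ω =>
    Set.indicator {ω' | X ω' ≤ ((k:ℝ)+1)/s} (fun ω' => ENNReal.ofReal (c k * X ω' ^ α)) ω
    with hFdef
  have hmeasF : ∀ k, Measurable (F k) := by
    intro k
    apply Measurable.indicator
    · fun_prop
    · exact measurableSet_le hX measurable_const
  -- pointwise bound
  have hpt : ∀ ω, ENNReal.ofReal (X ω ^ α * Real.exp (-(s * X ω))) ≤ ∑' k, F k ω := by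
    intro ω
    have hx0 : 0 ≤ X ω := hXnn ω
    set x := X ω with hxdef
    set j : ℕ := ⌊s * x⌋₊ with hjdef
    have hjle : (j:ℝ) ≤ s * x := Nat.floor_le (by positivity)
    have hjlt : s * x < (j:ℝ) + 1 := Nat.lt_floor_add_one _
    have hxle : ∀ i : ℕ, x ≤ (((i+j:ℕ):ℝ)+1)/s := by
      intro i
      rw [le_div_iff₀ hs0]
      push_cast
      nlinarith [(Nat.cast_nonneg i : (0:ℝ) ≤ (i:ℝ))]
    have hrnn : 0 ≤ x ^ α := Real.rpow_nonneg hx0 α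
    have hFval : ∀ i : ℕ, F (i+j) ω = ENNReal.ofReal (c (i+j) * x ^ α) := by
      intro i
      simp only [hFdef]
      exact Set.indicator_of_mem (show ω ∈ {ω' | X ω' ≤ (((i+j:ℕ):ℝ)+1)/s} from hxle i) (fun ω' => ENNReal.ofReal (c (i+j) * X ω' ^ α))
    have hc_shift : ∀ i : ℕ, c (i+j) = (Real.exp (-(j:ℝ)) * (1 - Real.exp (-1))) * Real.exp (-1) ^ i := by
      intro i
      show Real.exp (-(((i+j:ℕ)):ℝ)) * (1 - Real.exp (-1)) = _
      have h1 : (-(((i+j:ℕ)):ℝ)) = (-(i:ℝ)) + (-(j:ℝ)) := by push_cast; ring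
      rw [h1, Real.exp_add, exp_neg_nat i]
      ring
    have hsum_shift : Summable (fun i : ℕ => c (i+j)) := by
      rw [funext hc_shift]
      exact (summable_geometric_of_lt_one hq0.le hq1).mul_left _
    have htsum_c : ∑' i : ℕ, c (i+j) = Real.exp (-(j:ℝ)) := by
      rw [funext hc_shift, tsum_mul_left, tsum_geometric_of_lt_one hq0.le hq1]
      have : (1 - Real.exp (-1)) ≠ 0 := by linarith
      field_simp
    calc ENNReal.ofReal (x ^ α * Real.exp (-(s * x)))
        ≤ ENNReal.ofReal (x ^ α * Real.exp (-(j:ℝ))) := by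
          apply ENNReal.ofReal_le_ofReal
          exact mul_le_mul_of_nonneg_left (Real.exp_le_exp.2 (by linarith)) hrnn
      _ = ENNReal.ofReal (x ^ α) * ENNReal.ofReal (Real.exp (-(j:ℝ))) :=
          ENNReal.ofReal_mul hrnn
      _ = ENNReal.ofReal (x ^ α) * ∑' i : ℕ, ENNReal.ofReal (c (i+j)) := by
          rw [← ENNReal.ofReal_tsum_of_nonneg (fun i => hc_nonneg _) hsum_shift, htsum_c]
      _ = ∑' i : ℕ, ENNReal.ofReal (c (i+j) * x ^ α) := by
          rw [← ENNReal.tsum_mul_left]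
          congr 1
          funext i
          rw [← ENNReal.ofReal_mul hrnn, mul_comm]
      _ = ∑' i : ℕ, F (i+j) ω := by
          congr 1
          funext i
          rw [hFval i]
      _ ≤ ∑' k, F k ω :=
          ENNReal.tsum_comp_le_tsum_of_injective (add_left_injective j) (fun k => F k ω)
  -- per-k integral bound
  have hintk : ∀ k : ℕ, ∫⁻ ω, F k ω ∂μ
      ≤ ENNReal.ofReal (c k * (C₂ * (Real.log ((k:ℝ)+1) + L))) := by
    intro k
    have hset : MeasurableSet {ω' | X ω' ≤ ((k:ℝ)+1)/s} := measurableSet_le hX measurable_const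
    have hr : ((k:ℝ)+1)/s ≥ Real.exp 1 := by
      have h1 : (1:ℝ)/s ≤ ((k:ℝ)+1)/s := by
        gcongr
        have : (0:ℝ) ≤ (k:ℝ) := Nat.cast_nonneg k
        linarith
      linarith
    have hstep : ∫⁻ ω, F k ω ∂μ
        = ENNReal.ofReal (c k) * ∫⁻ ω in {ω' | X ω' ≤ ((k:ℝ)+1)/s}, ENNReal.ofReal (X ω ^ α) ∂μ := by
      rw [hFdef, lintegral_indicator hset]
      rw [← lintegral_const_mul' _ _ ENNReal.ofReal_ne_top]
      congr 1
      funext ω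
      rw [← ENNReal.ofReal_mul (hc_nonneg k)]
    rw [hstep]
    have h2 := htrunc (((k:ℝ)+1)/s) hr
    calc ENNReal.ofReal (c k) * ∫⁻ ω in {ω' | X ω' ≤ ((k:ℝ)+1)/s}, ENNReal.ofReal (X ω ^ α) ∂μ
        ≤ ENNReal.ofReal (c k) * ENNReal.ofReal (C₂ * Real.log (((k:ℝ)+1)/s)) :=
          mul_le_mul_right h2 _
      _ = ENNReal.ofReal (c k * (C₂ * Real.log (((k:ℝ)+1)/s))) :=
          (ENNReal.ofReal_mul (hc_nonneg k)).symm
      _ = ENNReal.ofReal (c k * (C₂ * (Real.log ((k:ℝ)+1) + L))) := by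
          rw [Real.log_div (by positivity) (ne_of_gt hs0), hLdef]
          ring_nf
  obtain ⟨hsumA, htsumA⟩ := sum_a C₂ L hC₂ hL1
  calc ∫⁻ ω, ENNReal.ofReal (X ω ^ α * Real.exp (-(s * X ω))) ∂μ
      ≤ ∫⁻ ω, ∑' k, F k ω ∂μ := lintegral_mono hpt
    _ = ∑' k, ∫⁻ ω, F k ω ∂μ := lintegral_tsum (fun k => (hmeasF k).aemeasurable)
    _ ≤ ∑' k, ENNReal.ofReal (c k * (C₂ * (Real.log ((k:ℝ)+1) + L))) :=
        ENNReal.tsum_le_tsum hintk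
    _ = ENNReal.ofReal (∑' k, c k * (C₂ * (Real.log ((k:ℝ)+1) + L))) := by
        rw [← ENNReal.ofReal_tsum_of_nonneg (fun k => mul_nonneg (hc_nonneg k)
          (mul_nonneg hC₂.le (by
            have h5 : (0:ℝ) ≤ Real.log ((k:ℝ)+1) :=
              Real.log_nonneg (by have := (Nat.cast_nonneg k : (0:ℝ) ≤ (k:ℝ)); linarith)
            linarith))) hsumA]
    _ ≤ ENNReal.ofReal ((Real.exp α + C₂ * ((Real.exp 1)⁻¹ + 1)) * |Real.log s|) := by
        rw [habs]
        apply ENNReal.ofReal_le_ofReal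
        have h3 : C₂ * (Real.exp (-1) + 1) * L ≤ (Real.exp α + C₂ * ((Real.exp 1)⁻¹ + 1)) * L := by
          rw [hqe]
          nlinarith [Real.exp_pos α, hL1]
        exact le_trans htsumA h3
end

section
/- For every s ∈ (0,1) and every x > 0, the identity (Γ(1−s)/s) · x^s = ∫₀^∞ (1 − exp(−x u)) / u^{s+1} du holds. -/
/-!
Integrate by parts with `u t = 1 - exp (-(x t))` and `v t = -t ^ (-s) / s`, so that
`v' t = t ^ (-(s + 1))`. The boundary term `u v` vanishes at `0` because `u t ≤ x t` and
`s < 1`, and at `∞` because `u` is bounded and `0 < s`. What is left is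
`(x / s) ∫ t ^ (-s) exp (-(x t)) dt = (x / s) Γ(1 - s) x ^ (s - 1)`.
-/

open Real MeasureTheory Set Filter Topology

lemma abs_one_sub_exp_neg_le {y : ℝ} (hy : 0 ≤ y) : |1 - exp (-y)| ≤ y := by
  rw [abs_of_nonneg (by simpa using exp_le_one_iff.2 (neg_nonpos.2 hy))]
  linarith [one_sub_le_exp_neg y]

lemma abs_one_sub_exp_neg_le_one {y : ℝ} (hy : 0 ≤ y) : |1 - exp (-y)| ≤ 1 := by
  rw [abs_of_nonneg (by simpa using exp_le_one_iff.2 (neg_nonpos.2 hy))]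
  linarith [exp_pos (-y)]

lemma hasDerivAt_one_sub_exp_neg_mul (x t : ℝ) :
    HasDerivAt (fun t => 1 - exp (-(x * t))) (x * exp (-(x * t))) t :=
  (((hasDerivAt_id t).const_mul x).neg.exp.const_sub 1).congr_deriv (by simp [mul_comm])

lemma hasDerivAt_neg_rpow_neg_div {s t : ℝ} (hs : s ≠ 0) (ht : t ≠ 0) :
    HasDerivAt (fun t => -t ^ (-s) / s) (t ^ (-(s + 1))) t :=
  ((hasDerivAt_rpow_const (p := -s) (Or.inl ht)).neg.div_const s).congr_deriv (by
    rw [show -s - 1 = -(s + 1) by ring]; field_simp)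

lemma integrableOn_one_sub_exp_neg_mul_mul_rpow {s x : ℝ} (hs : s ∈ Ioo 0 1) (hx : 0 ≤ x) :
    IntegrableOn (fun t => (1 - exp (-(x * t))) * t ^ (-(s + 1))) (Ioi 0) := by
  have hcont : ContinuousOn (fun t : ℝ => (1 - exp (-(x * t))) * t ^ (-(s + 1))) (Ioi 0) :=
    (by fun_prop : Continuous fun t : ℝ => 1 - exp (-(x * t))).continuousOn.mul
      (continuousOn_id.rpow_const fun t ht => Or.inl (ne_of_gt ht))
  have hnorm : ∀ t : ℝ, 0 < t →
      ‖(1 - exp (-(x * t))) * t ^ (-(s + 1))‖ = |1 - exp (-(x * t))| * t ^ (-(s + 1)) :=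
    fun t ht => by rw [norm_mul, norm_eq_abs, norm_of_nonneg (rpow_nonneg ht.le _)]
  rw [← Ioc_union_Ioi_eq_Ioi zero_le_one]
  refine IntegrableOn.union ?_ ?_
  · have hdom : IntegrableOn (fun t : ℝ => x * t ^ (-s)) (Ioc 0 1) :=
      ((intervalIntegrable_iff_integrableOn_Ioc_of_le zero_le_one).1
        (intervalIntegral.intervalIntegrable_rpow' (by linarith [hs.2]))).const_mul x
    refine hdom.mono' (hcont.mono Ioc_subset_Ioi_self |>.aestronglyMeasurable measurableSet_Ioc) ?_
    filter_upwards [ae_restrict_mem measurableSet_Ioc] with t ht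
    have hself : t * t ^ (-(s + 1)) = t ^ (-s) := by
      rw [mul_comm, ← rpow_add_one ht.1.ne']; ring_nf
    rw [hnorm t ht.1, ← hself, ← mul_assoc]
    exact mul_le_mul_of_nonneg_right (abs_one_sub_exp_neg_le (by nlinarith [ht.1]))
      (rpow_nonneg ht.1.le _)
  · refine (integrableOn_Ioi_rpow_of_lt (a := -(s + 1)) (by linarith [hs.1]) one_pos).mono'
      (hcont.mono (Ioi_subset_Ioi zero_le_one) |>.aestronglyMeasurable measurableSet_Ioi) ?_
    filter_upwards [ae_restrict_mem measurableSet_Ioi] with t (ht : 1 < t)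
    rw [hnorm t (by linarith)]
    exact mul_le_of_le_one_left (rpow_nonneg (by linarith) _)
      (abs_one_sub_exp_neg_le_one (by nlinarith))

lemma integrableOn_rpow_neg_mul_exp_neg_mul {s x : ℝ} (hs : s < 1) (hx : 0 < x) :
    IntegrableOn (fun t => t ^ (-s) * exp (-(x * t))) (Ioi 0) := by
  simpa using integrableOn_rpow_mul_exp_neg_mul_rpow (p := 1) (by linarith) one_pos hx

lemma integral_rpow_neg_mul_exp_neg_mul {s x : ℝ} (hs : s < 1) (hx : 0 < x) :
    ∫ t in Ioi 0, t ^ (-s) * exp (-(x * t)) = Gamma (1 - s) * x ^ (s - 1) := by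
  have h := integral_rpow_mul_exp_neg_mul_Ioi (a := 1 - s) (by linarith) hx
  rw [sub_sub_cancel_left, one_div, inv_rpow hx.le, ← rpow_neg hx.le, neg_sub] at h
  rw [h, mul_comm]

lemma tendsto_one_sub_exp_neg_mul_mul_neg_rpow_div_nhdsGT_zero {s x : ℝ} (hs : s < 1)
    (hx : 0 ≤ x) :
    Tendsto (fun t => (1 - exp (-(x * t))) * (-t ^ (-s) / s)) (𝓝[>] 0) (𝓝 0) := by
  have hpow : Tendsto (fun t : ℝ => t ^ (1 - s)) (𝓝[>] 0) (𝓝 0) := by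
    simpa [zero_rpow (by linarith : 1 - s ≠ 0)] using
      (continuousAt_rpow_const 0 (1 - s) (Or.inr (by linarith))).tendsto.mono_left
        nhdsWithin_le_nhds
  refine squeeze_zero_norm' ?_ (by simpa using hpow.const_mul (x / |s|))
  filter_upwards [self_mem_nhdsWithin] with t (ht : 0 < t)
  have hself : t * t ^ (-s) = t ^ (1 - s) := by
    rw [mul_comm, ← rpow_add_one ht.ne']; ring_nf
  rw [norm_mul, norm_div, norm_neg, norm_of_nonneg (rpow_nonneg ht.le _), norm_eq_abs,
    norm_eq_abs, ← hself]
  calc |1 - exp (-(x * t))| * (t ^ (-s) / |s|)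
      ≤ x * t * (t ^ (-s) / |s|) :=
        mul_le_mul_of_nonneg_right (abs_one_sub_exp_neg_le (by positivity)) (by positivity)
    _ = x / |s| * (t * t ^ (-s)) := by ring

lemma tendsto_one_sub_exp_neg_mul_mul_neg_rpow_div_atTop {s x : ℝ} (hs : 0 < s) (hx : 0 ≤ x) :
    Tendsto (fun t => (1 - exp (-(x * t))) * (-t ^ (-s) / s)) atTop (𝓝 0) := by
  have hv : Tendsto (fun t : ℝ => -t ^ (-s) / s) atTop (𝓝 0) := by
    simpa using (tendsto_rpow_neg_atTop hs).neg.div_const s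
  refine squeeze_zero_norm' ?_ (tendsto_zero_iff_norm_tendsto_zero.1 hv)
  filter_upwards [eventually_ge_atTop 0] with t ht
  rw [norm_mul]
  exact mul_le_of_le_one_left (norm_nonneg _)
    (abs_one_sub_exp_neg_le_one (mul_nonneg hx ht))

/-- (Γ(1−s)/s) x^s = ∫₀^∞ (1 − e^{−xu})/u^{s+1} du for s ∈ (0,1), x > 0. -/
theorem gamma_frac_identity (s x : ℝ) (hs : s ∈ Set.Ioo (0 : ℝ) 1) (hx : 0 < x) :
    Real.Gamma (1 - s) / s * x ^ s
      = ∫ u in Set.Ioi (0 : ℝ), (1 - Real.exp (-(x * u))) / u ^ (s + 1) := by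
  obtain ⟨hs0, hs1⟩ := hs
  have hderiv_mul_eq : (fun t => x * exp (-(x * t)) * (-t ^ (-s) / s))
      = fun t => -(x / s) * (t ^ (-s) * exp (-(x * t))) := by
    funext t; ring
  have hparts := integral_Ioi_mul_deriv_eq_deriv_mul
    (fun t _ => hasDerivAt_one_sub_exp_neg_mul x t)
    (fun t ht => hasDerivAt_neg_rpow_neg_div hs0.ne' (ne_of_gt ht))
    (integrableOn_one_sub_exp_neg_mul_mul_rpow ⟨hs0, hs1⟩ hx.le)
    (by rw [Pi.mul_def, hderiv_mul_eq]
        exact (integrableOn_rpow_neg_mul_exp_neg_mul hs1 hx).const_mul _)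
    (tendsto_one_sub_exp_neg_mul_mul_neg_rpow_div_nhdsGT_zero hs1 hx.le)
    (tendsto_one_sub_exp_neg_mul_mul_neg_rpow_div_atTop hs0 hx.le)
  rw [hderiv_mul_eq, integral_const_mul, integral_rpow_neg_mul_exp_neg_mul hs1 hx] at hparts
  have hintegrand : ∀ t ∈ Ioi (0 : ℝ),
      (1 - exp (-(x * t))) / t ^ (s + 1) = (1 - exp (-(x * t))) * t ^ (-(s + 1)) :=
    fun t ht => by rw [rpow_neg (le_of_lt ht), div_eq_mul_inv]
  rw [setIntegral_congr_fun measurableSet_Ioi hintegrand, hparts, rpow_sub_one hx.ne']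
  field_simp
  ring
end

section
/- Let α > 0 and let X be a nonnegative random variable such that h(t) := t^α P(X ≥ t) is log-concave on [b, ∞), unbounded (i.e., there is a sequence tₙ → ∞ with h(tₙ) → ∞), and ∫₀^r y^{α−1} P(X ≥ y) dy ≤ C₃ log r for all r ≥ e. Then h(r) ≤ C₃ for all r ≥ e. -/
open MeasureTheory Real Filter Set

/-!
A concave function that decreases somewhere stays below that value from then on, so the
unboundedness of `h` forces `log h`, hence `h`, to be nondecreasing on `[b, ∞)`; below
`b = essInf X` the tail probability is `1` and `h t = t ^ α`. Thus `h` is nondecreasing on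
`(0, ∞)`, and for `e ≤ r ≤ T`
`h r * log (T / r) ≤ ∫_r^T h y / y dy ≤ ∫_0^T y ^ (α - 1) P(X ≥ y) dy ≤ C₃ log T`.
Letting `T → ∞` gives `h r ≤ C₃`.
-/

theorem ConcaveOn.monotoneOn_Ici_of_tendsto_atTop {f : ℝ → ℝ} {b : ℝ}
    (hf : ConcaveOn ℝ (Ici b) f) {t : ℕ → ℝ} (ht : Tendsto t atTop atTop)
    (hft : Tendsto (f ∘ t) atTop atTop) : MonotoneOn f (Ici b) := by
  intro x hx y hy hxy
  by_contra! hyx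
  have hxy' : x < y := hxy.lt_of_ne (by rintro rfl; exact hyx.false)
  obtain ⟨n, hyn, hfn⟩ :=
    ((ht.eventually_ge_atTop y).and (hft.eventually_gt_atTop (f y))).exists
  exact (hf.right_le_of_le_left'' hx (hy.trans hyn) hxy' hyn hyx.le).not_gt hfn

theorem monotoneOn_Ioi_of_eqOn_rpow {h : ℝ → ℝ} {α b : ℝ} (hα : 0 ≤ α)
    (hlow : EqOn h (· ^ α) (Ioc 0 b)) (hhigh : MonotoneOn h (Ici b ∩ Ioi 0)) :
    MonotoneOn h (Ioi 0) := by
  rcases le_or_gt b 0 with hb | hb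
  · rwa [inter_eq_right.2 (Ioi_subset_Ici_self.trans (Ici_subset_Ici.2 hb))] at hhigh
  · have hrpow : MonotoneOn h (Ioc 0 b) :=
      ((monotoneOn_rpow_Ici_of_exponent_nonneg hα).mono
        (Ioc_subset_Ioi_self.trans Ioi_subset_Ici_self)).congr hlow.symm
    rw [inter_eq_left.2 (Ici_subset_Ioi.2 hb)] at hhigh
    rw [← Ioc_union_Ici_eq_Ioi hb]
    exact hrpow.union_right hhigh (isGreatest_Ioc hb) isLeast_Ici

theorem mul_log_sub_log_le_setIntegral_Ioc {f : ℝ → ℝ} {c r T : ℝ} (hr : 0 < r)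
    (hrT : r ≤ T) (hf : IntegrableOn f (Ioc 0 T)) (hf0 : ∀ y ∈ Ioc 0 T, 0 ≤ f y)
    (hcf : ∀ y ∈ Ioc r T, c / y ≤ f y) :
    c * (log T - log r) ≤ ∫ y in Ioc 0 T, f y := by
  have hT : 0 < T := hr.trans_le hrT
  have hrT_sub : Ioc r T ⊆ Ioc 0 T := Ioc_subset_Ioc_left hr.le
  have hcy : IntegrableOn (fun y => c / y) (Ioc r T) :=
    ((continuousOn_const.div continuousOn_id fun y hy => (hr.trans_le hy.1).ne').integrableOn_Icc
      ).mono_set Ioc_subset_Icc_self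
  calc c * (log T - log r) = ∫ y in r..T, c / y := by
        simp_rw [div_eq_mul_inv c]
        rw [intervalIntegral.integral_const_mul, integral_inv_of_pos hr hT,
          log_div hT.ne' hr.ne']
    _ = ∫ y in Ioc r T, c / y := intervalIntegral.integral_of_le hrT
    _ ≤ ∫ y in Ioc r T, f y :=
        setIntegral_mono_on hcy (hf.mono_set hrT_sub) measurableSet_Ioc hcf
    _ ≤ ∫ y in Ioc 0 T, f y :=
        setIntegral_mono_set hf (ae_restrict_of_forall_mem measurableSet_Ioc hf0)
          hrT_sub.eventuallyLE

theorem integrableOn_rpow_sub_one_mul_Ioc {α T C : ℝ} {p : ℝ → ℝ} (hα : 0 < α)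
    (hT : 0 ≤ T) (hp : Measurable p) (hpC : ∀ y, ‖p y‖ ≤ C) :
    IntegrableOn (fun y => y ^ (α - 1) * p y) (Ioc 0 T) :=
  ((intervalIntegrable_iff_integrableOn_Ioc_of_le hT).1
    (intervalIntegral.intervalIntegrable_rpow' (by linarith))).mul_bdd
    hp.aestronglyMeasurable (ae_of_all _ hpC)

theorem le_of_forall_mul_sub_le_mul {a C c : ℝ} (h : ∀ L ≥ c, a * (L - c) ≤ C * L) :
    a ≤ C := by
  by_contra! hCa
  have hL := h (max c (a * c / (a - C)) + 1) (by linarith [le_max_left c (a * c / (a - C))])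
  have hlt : a * c < (a - C) * (max c (a * c / (a - C)) + 1) :=
    (div_lt_iff₀' (sub_pos.2 hCa)).1 (by linarith [le_max_right c (a * c / (a - C))])
  linarith

section Tail

variable {Ω : Type*} [MeasurableSpace Ω] (μ : Measure Ω) (X : Ω → ℝ)

theorem antitone_toReal_measure_setOf_le [IsFiniteMeasure μ] :
    Antitone fun s => (μ {ω | s ≤ X ω}).toReal :=
  fun _ _ hst => ENNReal.toReal_mono (measure_ne_top μ _) (measure_mono fun _ hω => hst.trans hω)

theorem toReal_measure_setOf_le_eq_one_of_le_essInf [IsProbabilityMeasure μ]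
    (hX : IsBoundedUnder (· ≥ ·) (ae μ) X) {s : ℝ} (hs : s ≤ essInf X μ) :
    (μ {ω | s ≤ X ω}).toReal = 1 := by
  rw [measure_congr (eventuallyEq_univ.2 ((ae_essInf_le hX).mono fun _ hω => hs.trans hω)),
    measure_univ, ENNReal.toReal_one]

end Tail

theorem logconcave_unbounded_tail_bound_general {Ω : Type*} [MeasurableSpace Ω] (μ : Measure Ω)
    [IsProbabilityMeasure μ]
    (X : Ω → ℝ) (hXnn : ∀ ω, 0 ≤ X ω) (α b C₃ : ℝ)
    (hα : 0 < α) (hb : b = essInf X μ)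
    (h : ℝ → ℝ) (hdef : ∀ t, h t = t ^ α * (μ {ω | t ≤ X ω}).toReal)
    (hconc : ConcaveOn ℝ (Set.Ici b) (fun t => Real.log (h t)))
    (hunbdd : ∃ t : ℕ → ℝ, Tendsto t atTop atTop ∧ Tendsto (fun n => h (t n)) atTop atTop)
    (hint : ∀ r ≥ Real.exp 1,
      ∫ y in Set.Ioc (0 : ℝ) r, y ^ (α - 1) * (μ {ω | y ≤ X ω}).toReal ≤ C₃ * Real.log r) :
    ∀ r ≥ Real.exp 1, h r ≤ C₃ := by
  obtain ⟨t, ht, hht⟩ := hunbdd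
  set p : ℝ → ℝ := fun s => (μ {ω | s ≤ X ω}).toReal
  have hp_anti : Antitone p := antitone_toReal_measure_setOf_le μ X
  have hp_pos (s : ℝ) : 0 < p s := by
    obtain ⟨n, hsn, hn⟩ := ((ht.eventually_ge_atTop s).and (hht.eventually_gt_atTop 0)).exists
    rw [hdef] at hn
    exact (ENNReal.toReal_nonneg.lt_of_ne' (right_ne_zero_of_mul hn.ne')).trans_le (hp_anti hsn)
  have hh_pos (s : ℝ) (hs : 0 < s) : 0 < h s :=
    hdef s ▸ mul_pos (rpow_pos_of_pos hs α) (hp_pos s)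
  have hmono : MonotoneOn h (Ioi 0) := by
    refine monotoneOn_Ioi_of_eqOn_rpow (b := b) hα.le (fun s hs => ?_) fun x hx y hy hxy => ?_
    · rw [hdef, toReal_measure_setOf_le_eq_one_of_le_essInf μ X
        ⟨0, eventually_map.2 (.of_forall hXnn)⟩ (hb ▸ hs.2), mul_one]
    · have hlog := hconc.monotoneOn_Ici_of_tendsto_atTop ht (tendsto_log_atTop.comp hht)
      exact (log_le_log_iff (hh_pos x hx.2) (hh_pos y hy.2)).1 (hlog hx.1 hy.1 hxy)
  intro r hr
  have hr0 : 0 < r := (exp_pos 1).trans_le hr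
  refine le_of_forall_mul_sub_le_mul (c := log r) fun L hL => ?_
  have hrT : r ≤ exp L := (log_le_iff_le_exp hr0).1 hL
  have hintegrable := integrableOn_rpow_sub_one_mul_Ioc hα (exp_pos L).le hp_anti.measurable
    fun y => (norm_of_nonneg ENNReal.toReal_nonneg).trans_le measureReal_le_one
  have hlower (y : ℝ) (hy : y ∈ Ioc r (exp L)) : h r / y ≤ y ^ (α - 1) * p y := by
    have hy0 : 0 < y := hr0.trans hy.1
    rw [rpow_sub_one hy0.ne', div_mul_eq_mul_div, ← hdef]
    exact div_le_div_of_nonneg_right (hmono hr0 hy0 hy.1.le) hy0.le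
  calc h r * (L - log r) = h r * (log (exp L) - log r) := by rw [log_exp]
    _ ≤ ∫ y in Ioc 0 (exp L), y ^ (α - 1) * p y :=
        mul_log_sub_log_le_setIntegral_Ioc hr0 hrT hintegrable
          (fun y hy => mul_nonneg (rpow_nonneg hy.1.le _) (hp_pos y).le) hlower
    _ ≤ C₃ * log (exp L) := hint _ (hr.trans hrT)
    _ = C₃ * L := by rw [log_exp]

/-- If h(t) = t^α P(X ≥ t) is log-concave on [b,∞) (b = ess inf X) and unbounded along a
sequence tending to infinity, and ∫₀^r y^{α−1} P(X ≥ y) dy ≤ C₃ log r for all r ≥ e, then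
h(r) ≤ C₃ for all r ≥ e. -/
theorem logconcave_unbounded_tail_bound {Ω : Type*} [MeasurableSpace Ω] (μ : Measure Ω)
    [IsProbabilityMeasure μ]
    (X : Ω → ℝ) (hX : Measurable X) (hXnn : ∀ ω, 0 ≤ X ω) (α b C₃ : ℝ)
    (hα : 0 < α) (hC₃ : 0 < C₃) (hb : b = essInf X μ)
    (h : ℝ → ℝ) (hdef : ∀ t, h t = t ^ α * (μ {ω | t ≤ X ω}).toReal)
    (hconc : ConcaveOn ℝ (Set.Ici b) (fun t => Real.log (h t)))
    (hunbdd : ∃ t : ℕ → ℝ, Tendsto t atTop atTop ∧ Tendsto (fun n => h (t n)) atTop atTop)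
    (hint : ∀ r ≥ Real.exp 1,
      ∫ y in Set.Ioc (0 : ℝ) r, y ^ (α - 1) * (μ {ω | y ≤ X ω}).toReal ≤ C₃ * Real.log r) :
    ∀ r ≥ Real.exp 1, h r ≤ C₃ :=
  logconcave_unbounded_tail_bound_general μ X hXnn α b C₃ hα hb h hdef hconc hunbdd hint
end

section
/- Fix α > 0 and ρ ∈ (0,1). Let h: [0,∞) → [0,∞) be increasing with h(t) → ∞ and log h(t) < ρ (min(α,1)) log log t for all large t. Then there exists a random variable X with values in [1, ∞) such that: (i) ∫₀^r y^{α−1} P(X ≥ y) dy ≤ C log r for all r ≥ e and some constant C, and (ii) limsup_{t→∞} t^α P(X ≥ t) / h(t) ≥ 1. -/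
/-!
Take `X` purely atomic. Eventually `h t ≤ (log t) ^ q` with `q = ρ min(α, 1) < 1`, so `h` cannot
double from `√x` to `x` for all large `x`: iterating along `M ^ 2 ^ k` would give
`h (M ^ 2 ^ k) ≥ 2 ^ k`. Choose a very sparse sequence `aₙ` of points where it does not double and
put mass `h(aₙ) aₙ^(-α)` at `aₙ`, the rest at `1`. Then `aₙ^α P(X ≥ aₙ) ≥ h(aₙ)`; the ratio also
stays bounded (which Lean's `limsup` needs), because `P(X ≥ t)` is at most twice the next mass and
`h` does not double between `√aₙ` and `aₙ`. The truncated integral is essentially the sum of the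
`h(aₖ) ≤ log aₖ` over the atoms below `r`, and `log aₖ` at least doubles with `k`, so this sum is at
most `2 log r`.
-/

open MeasureTheory Real Filter

section Sequences

variable {m x : ℕ → ℝ}

theorem le_mul_half_pow_of_le_half (hm : ∀ n, m (n + 1) ≤ m n / 2) (N k : ℕ) :
    m (k + N) ≤ m N * (1 / 2) ^ k := by
  induction k with
  | zero => simp
  | succ k ih =>
    calc m (k + 1 + N) = m (k + N + 1) := by rw [add_right_comm]
      _ ≤ m (k + N) / 2 := hm _
      _ ≤ m N * (1 / 2) ^ k / 2 := by linarith
      _ = m N * (1 / 2) ^ (k + 1) := by ring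

theorem summable_of_le_half (hm0 : ∀ n, 0 ≤ m n) (hm : ∀ n, m (n + 1) ≤ m n / 2) :
    Summable m :=
  Summable.of_nonneg_of_le hm0 (fun k => by simpa using le_mul_half_pow_of_le_half hm 0 k)
    (summable_geometric_two.mul_left (m 0))

theorem tsum_nat_add_le_two_mul_of_le_half (hm0 : ∀ n, 0 ≤ m n)
    (hm : ∀ n, m (n + 1) ≤ m n / 2) (N : ℕ) : ∑' k, m (k + N) ≤ 2 * m N :=
  calc ∑' k, m (k + N) ≤ ∑' k, m N * (1 / 2) ^ k :=
        Summable.tsum_le_tsum (le_mul_half_pow_of_le_half hm N)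
          ((summable_nat_add_iff N).2 (summable_of_le_half hm0 hm))
          (summable_geometric_two.mul_left _)
    _ = 2 * m N := by rw [tsum_mul_left, tsum_geometric_two, mul_comm]

theorem sum_range_succ_le_two_mul_of_two_mul_le (h0 : 0 ≤ x 0)
    (hx : ∀ n, 2 * x n ≤ x (n + 1)) (n : ℕ) : ∑ k ∈ Finset.range (n + 1), x k ≤ 2 * x n := by
  induction n with
  | zero => simp only [zero_add, Finset.sum_range_one]; linarith
  | succ n ih => rw [Finset.sum_range_succ]; linarith [hx n]

end Sequences

theorem exists_seq_of_frequently {β : Type*} [Preorder β] [IsDirectedOrder β] [Nonempty β]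
    {P : β → Prop} (hP : ∃ᶠ x in atTop, P x) (f : β → β) :
    ∃ a : ℕ → β, (∀ n, P (a n)) ∧ ∀ n, f (a n) ≤ a (n + 1) := by
  choose g hg using frequently_atTop.1 hP
  refine ⟨fun n => Nat.rec (g (Classical.arbitrary β)) (fun _ y => g (f y)) n,
    fun n => ?_, fun n => (hg _).1⟩
  cases n <;> exact (hg _).2

section SlowVariation

variable {h : ℝ → ℝ}

theorem two_pow_mul_le_apply_pow_two_pow {M : ℝ} (hM : 1 ≤ M)
    (hh : ∀ x ≥ M, 2 * h √x ≤ h x) (k : ℕ) : 2 ^ k * h M ≤ h (M ^ 2 ^ k) := by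
  induction k with
  | zero => simp
  | succ k ih =>
    have hsq : M ^ 2 ^ (k + 1) = (M ^ 2 ^ k) ^ 2 := by rw [pow_succ, pow_mul]
    calc 2 ^ (k + 1) * h M = 2 * (2 ^ k * h M) := by ring
      _ ≤ 2 * h √(M ^ 2 ^ (k + 1)) := by
          rw [hsq, sqrt_sq (by positivity)]; linarith
      _ ≤ h (M ^ 2 ^ (k + 1)) := hh _ (le_self_pow₀ hM (by positivity))

theorem eventually_one_le_and_le_log_rpow {q : ℝ} (htend : Tendsto h atTop atTop)
    (hgrow : ∀ᶠ t in atTop, log (h t) < q * log (log t)) :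
    ∀ᶠ t in atTop, 1 ≤ h t ∧ h t ≤ log t ^ q := by
  filter_upwards [hgrow, htend.eventually_ge_atTop 1, eventually_gt_atTop 1] with t hlt h1 ht1
  refine ⟨h1, ?_⟩
  calc h t = exp (log (h t)) := (exp_log (by linarith)).symm
    _ ≤ exp (q * log (log t)) := exp_le_exp.2 hlt.le
    _ = log t ^ q := by rw [rpow_def_of_pos (log_pos ht1), mul_comm]

theorem frequently_apply_le_two_mul_apply_sqrt {q : ℝ} (hq : q < 1)
    (hh : ∀ᶠ t in atTop, 1 ≤ h t ∧ h t ≤ log t ^ q) : ∃ᶠ x in atTop, h x ≤ 2 * h √x := by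
  by_contra hcon
  rw [not_frequently] at hcon
  obtain ⟨M, hM⟩ := eventually_atTop.1 ((hh.and hcon).and (eventually_ge_atTop 1))
  have hM1 : 1 ≤ M := (hM M le_rfl).2
  have hdouble := two_pow_mul_le_apply_pow_two_pow hM1 fun x hx => (not_le.1 (hM x hx).1.2).le
  have hbound : ∀ k : ℕ, ((2 : ℝ) ^ k) ^ (1 - q) ≤ log M ^ q := by
    intro k
    have hle : (2 : ℝ) ^ k ≤ ((2 : ℝ) ^ k) ^ q * log M ^ q :=
      calc (2 : ℝ) ^ k ≤ 2 ^ k * h M := le_mul_of_one_le_right (by positivity) (hM M le_rfl).1.1.1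
        _ ≤ h (M ^ 2 ^ k) := hdouble k
        _ ≤ log (M ^ 2 ^ k) ^ q := (hM _ (le_self_pow₀ hM1 (by positivity))).1.1.2
        _ = ((2 : ℝ) ^ k) ^ q * log M ^ q := by
          rw [log_pow, Nat.cast_pow, Nat.cast_ofNat, mul_rpow (by positivity) (log_nonneg hM1)]
    rw [rpow_sub (by positivity), rpow_one, div_le_iff₀ (by positivity)]
    linarith
  obtain ⟨k, hk⟩ := (((tendsto_rpow_atTop (sub_pos.2 hq)).comp
    (tendsto_pow_atTop_atTop_of_one_lt one_lt_two)).eventually_gt_atTop (log M ^ q)).exists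
  exact hk.not_ge (hbound k)

end SlowVariation

section TruncatedIntegral

open Set

noncomputable def truncRpow (α b : ℝ) : ℝ → ℝ := (Iic b).indicator fun y => y ^ (α - 1)

variable {α r : ℝ}

theorem truncRpow_nonneg (b : ℝ) {y : ℝ} (hy : 0 ≤ y) : 0 ≤ truncRpow α b y :=
  indicator_nonneg (fun _ _ => rpow_nonneg hy _) y

theorem integrableOn_truncRpow (hα : 0 < α) (b r : ℝ) : IntegrableOn (truncRpow α b) (Ioc 0 r) :=
  (intervalIntegral.intervalIntegrable_rpow' (by linarith)).1.indicator measurableSet_Iic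

theorem setIntegral_Ioc_rpow_sub_one (hα : 0 < α) {b : ℝ} (hb : 0 ≤ b) :
    ∫ y in Ioc 0 b, y ^ (α - 1) = b ^ α / α := by
  rw [← intervalIntegral.integral_of_le hb, integral_rpow (Or.inl (by linarith)),
    sub_add_cancel, zero_rpow hα.ne', sub_zero]

theorem setIntegral_truncRpow (hα : 0 < α) {b : ℝ} (hb : 0 ≤ b) (hbr : b ≤ r) :
    ∫ y in Ioc 0 r, truncRpow α b y = b ^ α / α := by
  rw [truncRpow, setIntegral_indicator measurableSet_Iic, Ioc_inter_Iic, min_eq_right hbr,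
    setIntegral_Ioc_rpow_sub_one hα hb]

variable {ι : Type*} {F : ℝ → ℝ} {s : Finset ι} {b c : ι → ℝ} {d : ℝ}

theorem rpow_sub_one_mul_le_truncRpow (hF1 : ∀ y, F y ≤ 1)
    (hF : ∀ y ∈ Ioc 1 r, F y ≤ ∑ k ∈ s, (if y ≤ b k then c k else 0) + d)
    (hc : ∀ k ∈ s, 0 ≤ c k) (hd : 0 ≤ d) {y : ℝ} (hy : y ∈ Ioc 0 r) :
    y ^ (α - 1) * F y ≤
      truncRpow α 1 y + ∑ k ∈ s, truncRpow α (b k) y * c k + truncRpow α r y * d := by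
  obtain ⟨hy0, hyr⟩ := hy
  have hIr : truncRpow α r y = y ^ (α - 1) := indicator_of_mem (mem_Iic.2 hyr) _
  rcases le_or_gt y 1 with hy1 | hy1
  · have hI1 : truncRpow α 1 y = y ^ (α - 1) := indicator_of_mem (mem_Iic.2 hy1) _
    have hrest : 0 ≤ ∑ k ∈ s, truncRpow α (b k) y * c k + truncRpow α r y * d :=
      add_nonneg (Finset.sum_nonneg fun k hk => mul_nonneg (truncRpow_nonneg _ hy0.le) (hc k hk))
        (mul_nonneg (truncRpow_nonneg _ hy0.le) hd)
    have := mul_le_mul_of_nonneg_left (hF1 y) (rpow_nonneg hy0.le (α - 1))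
    linarith
  · have hstep : ∀ k, y ^ (α - 1) * (if y ≤ b k then c k else 0) = truncRpow α (b k) y * c k :=
      fun k => by by_cases hk : y ≤ b k <;> simp [truncRpow, hk]
    calc y ^ (α - 1) * F y
        ≤ y ^ (α - 1) * (∑ k ∈ s, (if y ≤ b k then c k else 0) + d) :=
          mul_le_mul_of_nonneg_left (hF y ⟨hy1, hyr⟩) (rpow_nonneg hy0.le _)
      _ = ∑ k ∈ s, truncRpow α (b k) y * c k + truncRpow α r y * d := by
          rw [mul_add, Finset.mul_sum, hIr]; simp only [hstep]
      _ ≤ _ := by linarith [truncRpow_nonneg (α := α) 1 hy0.le]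

theorem setIntegral_rpow_sub_one_mul_le (hα : 0 < α) (hr : 1 ≤ r) (hF0 : ∀ y, 0 ≤ F y)
    (hF1 : ∀ y, F y ≤ 1) (hF : ∀ y ∈ Ioc 1 r, F y ≤ ∑ k ∈ s, (if y ≤ b k then c k else 0) + d)
    (hb : ∀ k ∈ s, 0 ≤ b k ∧ b k ≤ r) (hc : ∀ k ∈ s, 0 ≤ c k) (hd : 0 ≤ d) :
    ∫ y in Ioc 0 r, y ^ (α - 1) * F y ≤ (1 + ∑ k ∈ s, b k ^ α * c k + r ^ α * d) / α := by
  have hI := integrableOn_truncRpow hα (r := r)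
  have hsum : IntegrableOn (fun y => ∑ k ∈ s, truncRpow α (b k) y * c k) (Ioc 0 r) :=
    integrable_finsetSum _ fun k _ => (hI _).mul_const _
  have h1sum : IntegrableOn (fun y => truncRpow α 1 y + ∑ k ∈ s, truncRpow α (b k) y * c k)
      (Ioc 0 r) := (hI 1).add hsum
  have hrd : IntegrableOn (fun y => truncRpow α r y * d) (Ioc 0 r) := (hI r).mul_const d
  have hIb : ∀ k ∈ s, ∫ y in Ioc 0 r, truncRpow α (b k) y * c k = b k ^ α * c k / α :=
    fun k hk => by
      rw [integral_mul_const, setIntegral_truncRpow hα (hb k hk).1 (hb k hk).2]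
      ring
  calc ∫ y in Ioc 0 r, y ^ (α - 1) * F y
      ≤ ∫ y in Ioc 0 r,
          (truncRpow α 1 y + ∑ k ∈ s, truncRpow α (b k) y * c k + truncRpow α r y * d) :=
        integral_mono_of_nonneg
          (ae_restrict_of_forall_mem measurableSet_Ioc fun y hy =>
            mul_nonneg (rpow_nonneg hy.1.le _) (hF0 y))
          (h1sum.add hrd) (ae_restrict_of_forall_mem measurableSet_Ioc fun y hy =>
            rpow_sub_one_mul_le_truncRpow hF1 hF hc hd hy)
    _ = (1 + ∑ k ∈ s, b k ^ α * c k + r ^ α * d) / α := by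
        rw [integral_add h1sum hrd, integral_add (hI 1) hsum, integral_finsetSum _ fun k _ =>
          (hI _).mul_const _, Finset.sum_congr rfl hIb, integral_mul_const,
          setIntegral_truncRpow hα zero_le_one hr,
          setIntegral_truncRpow hα (zero_le_one.trans hr) le_rfl,
          one_rpow, add_div, add_div, Finset.sum_div]
        ring

end TruncatedIntegral

noncomputable def atomicMeasure (a m : ℕ → ℝ) : Measure ℝ :=
  Measure.sum (fun n => ENNReal.ofReal (m n) • Measure.dirac (a n)) +
    (1 - ∑' n, ENNReal.ofReal (m n)) • Measure.dirac 1

section AtomicMeasure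

open Set

variable {a m : ℕ → ℝ}

theorem atomicMeasure_apply {s : Set ℝ} (hs : MeasurableSet s) :
    atomicMeasure a m s = ∑' n, ENNReal.ofReal (m n) * s.indicator 1 (a n) +
      (1 - ∑' n, ENNReal.ofReal (m n)) * s.indicator 1 1 := by
  simp [atomicMeasure, Measure.sum_apply _ hs, Measure.dirac_apply]

theorem isProbabilityMeasure_atomicMeasure (hm0 : ∀ n, 0 ≤ m n) (hm : Summable m)
    (hm1 : ∑' n, m n ≤ 1) : IsProbabilityMeasure (atomicMeasure a m) := by
  constructor
  rw [atomicMeasure_apply MeasurableSet.univ]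
  simp only [indicator_univ, Pi.one_apply, mul_one]
  refine add_tsub_cancel_of_le ?_
  rw [← ENNReal.ofReal_tsum_of_nonneg hm0 hm]
  exact ENNReal.ofReal_le_one.2 hm1

theorem atomicMeasure_Iio_one (ha : ∀ n, 1 ≤ a n) : atomicMeasure a m (Iio 1) = 0 := by
  rw [atomicMeasure_apply measurableSet_Iio]
  simp [fun n => (ha n).not_gt]

theorem summable_ite_le (hm0 : ∀ n, 0 ≤ m n) (hm : Summable m) (t : ℝ) :
    Summable fun n => if t ≤ a n then m n else 0 :=
  hm.of_nonneg_of_le (fun n => ite_nonneg (hm0 n) le_rfl) fun n => by split_ifs <;> simp [hm0]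

theorem toReal_atomicMeasure_Ici (hm0 : ∀ n, 0 ≤ m n) (hm : Summable m) {t : ℝ} (ht : 1 < t) :
    (atomicMeasure a m (Ici t)).toReal = ∑' n, if t ≤ a n then m n else 0 := by
  have hnn : ∀ n, 0 ≤ if t ≤ a n then m n else 0 := fun n => ite_nonneg (hm0 n) le_rfl
  rw [atomicMeasure_apply measurableSet_Ici, indicator_of_notMem (by simpa using ht), mul_zero,
    add_zero, ← ENNReal.toReal_ofReal (tsum_nonneg hnn),
    ENNReal.ofReal_tsum_of_nonneg hnn (summable_ite_le hm0 hm t)]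
  congr 1
  refine tsum_congr fun n => ?_
  by_cases hn : t ≤ a n <;> simp [hn]

theorem le_toReal_atomicMeasure_Ici (hm0 : ∀ n, 0 ≤ m n) (hm : Summable m) {n : ℕ}
    (ha : 1 < a n) : m n ≤ (atomicMeasure a m (Ici (a n))).toReal := by
  rw [toReal_atomicMeasure_Ici hm0 hm ha]
  simpa using (summable_ite_le (a := a) hm0 hm (a n)).le_tsum n fun k _ => ite_nonneg (hm0 k) le_rfl

theorem toReal_atomicMeasure_Ici_le (hm0 : ∀ n, 0 ≤ m n) (hm : ∀ n, m (n + 1) ≤ m n / 2)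
    {t : ℝ} (ht : 1 < t) (N : ℕ) :
    (atomicMeasure a m (Ici t)).toReal ≤
      ∑ k ∈ Finset.range N, (if t ≤ a k then m k else 0) + 2 * m N := by
  have hsum := summable_of_le_half hm0 hm
  have hs := summable_ite_le (a := a) hm0 hsum t
  rw [toReal_atomicMeasure_Ici hm0 hsum ht, ← hs.sum_add_tsum_nat_add N]
  gcongr
  calc (∑' k, if t ≤ a (k + N) then m (k + N) else 0) ≤ ∑' k, m (k + N) :=
        ((summable_nat_add_iff N).2 hs).tsum_le_tsum (fun k => by split_ifs <;> simp [hm0])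
          ((summable_nat_add_iff N).2 hsum)
    _ ≤ 2 * m N := tsum_nat_add_le_two_mul_of_le_half hm0 hm N

end AtomicMeasure

/-- `two_mul_rpow_le` makes the masses `h (a n) * a n ^ (-α)` at least halve from one atom to the
next, and `apply_le_two_mul_apply_sqrt` keeps `h` from doubling between `√(a n)` and `a n`. -/
structure IsSparseSeq (h : ℝ → ℝ) (α : ℝ) (a : ℕ → ℝ) : Prop where
  one_le_apply_le_log : ∀ n, ∀ t ≥ √(a n), 1 ≤ h t ∧ h t ≤ log t
  two_le_rpow_zero : 2 ≤ a 0 ^ (α / 2)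
  apply_le_rpow : ∀ n, h (a n) ≤ a n ^ (α / 2)
  apply_le_two_mul_apply_sqrt : ∀ n, h (a n) ≤ 2 * h √(a n)
  two_mul_rpow_le : ∀ n, 2 * a n ^ α ≤ a (n + 1) ^ (α / 2)

theorem exists_isSparseSeq {h : ℝ → ℝ} {α q : ℝ} (hα : 0 < α) (hq : q < 1)
    (hh : ∀ᶠ t in atTop, 1 ≤ h t ∧ h t ≤ log t ^ q) : ∃ a, IsSparseSeq h α a := by
  have hlog : ∀ᶠ t in atTop, 1 ≤ h t ∧ h t ≤ log t := by
    filter_upwards [hh, eventually_ge_atTop (exp 1)] with t ht hte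
    have h1 : 1 ≤ log t := by rwa [le_log_iff_exp_le ((exp_pos 1).trans_le hte)]
    exact ⟨ht.1, ht.2.trans (by simpa using rpow_le_rpow_of_exponent_le h1 hq.le)⟩
  obtain ⟨T, hT⟩ := eventually_atTop.1 hlog
  have hP : ∃ᶠ x in atTop,
      (0 ≤ x ∧ T ≤ √x ∧ 2 ≤ x ^ (α / 2) ∧ h x ≤ x ^ (α / 2)) ∧ h x ≤ 2 * h √x := by
    refine Eventually.and_frequently ?_ (frequently_apply_le_two_mul_apply_sqrt hq hh)
    filter_upwards [eventually_ge_atTop 0, tendsto_sqrt_atTop.eventually_ge_atTop T,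
      (tendsto_rpow_atTop (half_pos hα)).eventually_ge_atTop 2, hlog,
      (isLittleO_log_rpow_atTop (half_pos hα)).eventuallyLE] with x hx0 hxT hx2 hxh hxlog
    refine ⟨hx0, hxT, hx2, hxh.2.trans ?_⟩
    rw [norm_of_nonneg (rpow_nonneg hx0 _)] at hxlog
    exact (le_abs_self _).trans hxlog
  obtain ⟨a, hPa, hstep⟩ := exists_seq_of_frequently hP fun x => (2 * x ^ α) ^ (2 / α)
  refine ⟨a, fun n t ht => hT t ((hPa n).1.2.1.trans ht), (hPa 0).1.2.2.1,
    fun n => (hPa n).1.2.2.2, fun n => (hPa n).2, fun n => ?_⟩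
  have hpos : 0 ≤ 2 * a n ^ α := mul_nonneg zero_le_two (rpow_nonneg (hPa n).1.1 _)
  calc 2 * a n ^ α = ((2 * a n ^ α) ^ (2 / α)) ^ (α / 2) := by
        rw [← rpow_mul hpos, show 2 / α * (α / 2) = 1 by field_simp, rpow_one]
    _ ≤ a (n + 1) ^ (α / 2) := rpow_le_rpow (rpow_nonneg hpos _) (hstep n) (by positivity)

noncomputable def atomMass (h : ℝ → ℝ) (α : ℝ) (a : ℕ → ℝ) (n : ℕ) : ℝ := h (a n) * a n ^ (-α)

namespace IsSparseSeq

open Set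

variable {h : ℝ → ℝ} {α : ℝ} {a : ℕ → ℝ}

theorem one_lt_sqrt (ha : IsSparseSeq h α a) (n : ℕ) : 1 < √(a n) := by
  have h1 := ha.one_le_apply_le_log n _ le_rfl
  exact (log_pos_iff (sqrt_nonneg _)).1 (by linarith [h1.1, h1.2])

theorem one_lt (ha : IsSparseSeq h α a) (n : ℕ) : 1 < a n := by
  simpa using (lt_sqrt zero_le_one).1 (ha.one_lt_sqrt n)

theorem pos (ha : IsSparseSeq h α a) (n : ℕ) : 0 < a n := zero_lt_one.trans (ha.one_lt n)

theorem sqrt_le (ha : IsSparseSeq h α a) (n : ℕ) : √(a n) ≤ a n :=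
  (sqrt_le_left (ha.pos n).le).2 (by nlinarith [ha.one_lt n])

theorem one_le_apply (ha : IsSparseSeq h α a) (n : ℕ) : 1 ≤ h (a n) :=
  (ha.one_le_apply_le_log n _ (ha.sqrt_le n)).1

theorem apply_le_log (ha : IsSparseSeq h α a) (n : ℕ) : h (a n) ≤ log (a n) :=
  (ha.one_le_apply_le_log n _ (ha.sqrt_le n)).2

theorem sq_le_succ (ha : IsSparseSeq h α a) (hα : 0 < α) (n : ℕ) : a n ^ 2 ≤ a (n + 1) := by
  rw [← rpow_le_rpow_iff (by positivity) (ha.pos _).le (half_pos hα)]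
  calc (a n ^ 2) ^ (α / 2) = a n ^ α := by
        rw [← rpow_natCast, ← rpow_mul (ha.pos n).le]; ring_nf
    _ ≤ 2 * a n ^ α := by linarith [rpow_nonneg (ha.pos n).le α]
    _ ≤ a (n + 1) ^ (α / 2) := ha.two_mul_rpow_le n

theorem two_mul_log_le (ha : IsSparseSeq h α a) (hα : 0 < α) (n : ℕ) :
    2 * log (a n) ≤ log (a (n + 1)) := by
  rw [← Nat.cast_ofNat, ← log_pow]
  exact log_le_log (by have := ha.pos n; positivity) (ha.sq_le_succ hα n)

theorem tendsto_atTop (ha : IsSparseSeq h α a) (hα : 0 < α) : Tendsto a atTop atTop :=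
  tendsto_atTop_mono (fun n => log_le_self (ha.pos n).le)
    (tendsto_atTop_of_geom_le (log_pos (ha.one_lt 0)) one_lt_two (ha.two_mul_log_le hα))

theorem sum_apply_le_two_mul_log (ha : IsSparseSeq h α a) (hα : 0 < α) {r : ℝ} (hr : 1 ≤ r)
    {N : ℕ} (hN : ∀ k < N, a k ≤ r) : ∑ k ∈ Finset.range N, h (a k) ≤ 2 * log r := by
  cases N with
  | zero => simpa using log_nonneg hr
  | succ M =>
    calc ∑ k ∈ Finset.range (M + 1), h (a k) ≤ ∑ k ∈ Finset.range (M + 1), log (a k) :=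
          Finset.sum_le_sum fun k _ => ha.apply_le_log k
      _ ≤ 2 * log (a M) := sum_range_succ_le_two_mul_of_two_mul_le (log_nonneg (ha.one_lt 0).le)
          (ha.two_mul_log_le hα) M
      _ ≤ 2 * log r := by gcongr; exacts [ha.pos M, hN M M.lt_succ_self]

theorem atomMass_pos (ha : IsSparseSeq h α a) (n : ℕ) : 0 < atomMass h α a n :=
  mul_pos (zero_lt_one.trans_le (ha.one_le_apply n)) (rpow_pos_of_pos (ha.pos n) _)

theorem rpow_mul_atomMass (ha : IsSparseSeq h α a) (n : ℕ) :
    a n ^ α * atomMass h α a n = h (a n) := by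
  rw [atomMass, mul_left_comm, ← rpow_add (ha.pos n), add_neg_cancel, rpow_zero, mul_one]

theorem atomMass_le (ha : IsSparseSeq h α a) (n : ℕ) : atomMass h α a n ≤ (a n ^ (α / 2))⁻¹ :=
  calc h (a n) * a n ^ (-α) ≤ a n ^ (α / 2) * a n ^ (-α) :=
        mul_le_mul_of_nonneg_right (ha.apply_le_rpow n) (rpow_nonneg (ha.pos n).le _)
    _ = (a n ^ (α / 2))⁻¹ := by
        rw [← rpow_add (ha.pos n), ← rpow_neg (ha.pos n).le]; ring_nf

theorem atomMass_succ_le_half (ha : IsSparseSeq h α a) (n : ℕ) :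
    atomMass h α a (n + 1) ≤ atomMass h α a n / 2 :=
  calc atomMass h α a (n + 1) ≤ (a (n + 1) ^ (α / 2))⁻¹ := ha.atomMass_le _
    _ ≤ (2 * a n ^ α)⁻¹ :=
        inv_anti₀ (mul_pos two_pos (rpow_pos_of_pos (ha.pos n) _)) (ha.two_mul_rpow_le n)
    _ = a n ^ (-α) / 2 := by rw [rpow_neg (ha.pos n).le]; ring
    _ ≤ atomMass h α a n / 2 := by
        gcongr
        exact le_mul_of_one_le_left (rpow_nonneg (ha.pos n).le _) (ha.one_le_apply n)

theorem summable_atomMass (ha : IsSparseSeq h α a) : Summable (atomMass h α a) :=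
  summable_of_le_half (fun n => (ha.atomMass_pos n).le) ha.atomMass_succ_le_half

theorem tsum_atomMass_le_one (ha : IsSparseSeq h α a) : ∑' n, atomMass h α a n ≤ 1 := by
  have htail := tsum_nat_add_le_two_mul_of_le_half (fun n => (ha.atomMass_pos n).le)
    ha.atomMass_succ_le_half 0
  have hzero : atomMass h α a 0 ≤ 1 / 2 :=
    (ha.atomMass_le 0).trans (by rw [one_div]; exact inv_anti₀ two_pos ha.two_le_rpow_zero)
  simp only [add_zero] at htail
  linarith

theorem rpow_mul_atomMass_le_one (ha : IsSparseSeq h α a) (hα : 0 ≤ α) {n : ℕ} {t : ℝ}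
    (ht0 : 0 ≤ t) (ht : t ≤ √(a n)) : t ^ α * atomMass h α a n ≤ 1 :=
  calc t ^ α * atomMass h α a n ≤ √(a n) ^ α * atomMass h α a n :=
        mul_le_mul_of_nonneg_right (rpow_le_rpow ht0 ht hα) (ha.atomMass_pos n).le
    _ = a n ^ (α / 2) * atomMass h α a n := by
        rw [sqrt_eq_rpow, ← rpow_mul (ha.pos n).le]; ring_nf
    _ ≤ a n ^ (α / 2) * (a n ^ (α / 2))⁻¹ :=
        mul_le_mul_of_nonneg_left (ha.atomMass_le n) (rpow_nonneg (ha.pos n).le _)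
    _ = 1 := mul_inv_cancel₀ (rpow_pos_of_pos (ha.pos n) _).ne'

theorem rpow_mul_atomMass_le_two_mul (ha : IsSparseSeq h α a) (hα : 0 ≤ α)
    (hmono : MonotoneOn h (Ici 0)) {n : ℕ} {t : ℝ} (ht : √(a n) ≤ t) (hta : t ≤ a n) :
    t ^ α * atomMass h α a n ≤ 2 * h t :=
  calc t ^ α * atomMass h α a n ≤ a n ^ α * atomMass h α a n :=
        mul_le_mul_of_nonneg_right (rpow_le_rpow ((sqrt_nonneg _).trans ht) hta hα)
          (ha.atomMass_pos n).le
    _ = h (a n) := ha.rpow_mul_atomMass n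
    _ ≤ 2 * h √(a n) := ha.apply_le_two_mul_apply_sqrt n
    _ ≤ 2 * h t := by
        gcongr
        exact hmono (sqrt_nonneg _) ((sqrt_nonneg _).trans ht) ht

theorem isProbabilityMeasure (ha : IsSparseSeq h α a) :
    IsProbabilityMeasure (atomicMeasure a (atomMass h α a)) :=
  isProbabilityMeasure_atomicMeasure (fun n => (ha.atomMass_pos n).le) ha.summable_atomMass
    ha.tsum_atomMass_le_one

theorem toReal_Ici_le (ha : IsSparseSeq h α a) {t : ℝ} (ht : 1 < t) (N : ℕ) :
    (atomicMeasure a (atomMass h α a) (Ici t)).toReal ≤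
      ∑ k ∈ Finset.range N, (if t ≤ a k then atomMass h α a k else 0) + 2 * atomMass h α a N :=
  toReal_atomicMeasure_Ici_le (fun n => (ha.atomMass_pos n).le) ha.atomMass_succ_le_half ht N

theorem setIntegral_le (ha : IsSparseSeq h α a) (hα : 0 < α) (hmono : MonotoneOn h (Ici 0))
    {r : ℝ} (hr : exp 1 ≤ r) :
    ∫ y in Ioc 0 r, y ^ (α - 1) * (atomicMeasure a (atomMass h α a) (Ici y)).toReal ≤
      7 / α * log r := by
  have hlog : 1 ≤ log r := by rwa [le_log_iff_exp_le ((exp_pos 1).trans_le hr)]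
  have hr1 : 1 ≤ r := (one_le_exp zero_le_one).trans hr
  have hex : ∃ n, r < a n := ((ha.tendsto_atTop hα).eventually_gt_atTop r).exists
  have hbelow : ∀ k < Nat.find hex, a k ≤ r := fun k hk => not_lt.1 (Nat.find_min hex hk)
  have hsum : ∑ k ∈ Finset.range (Nat.find hex), a k ^ α * atomMass h α a k ≤ 2 * log r := by
    simpa only [ha.rpow_mul_atomMass] using ha.sum_apply_le_two_mul_log hα hr1 hbelow
  have hlast : r ^ α * atomMass h α a (Nat.find hex) ≤ 2 * log r := by
    rcases le_total r √(a (Nat.find hex)) with hr' | hr'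
    · linarith [ha.rpow_mul_atomMass_le_one hα.le (by positivity) hr']
    · calc _ ≤ 2 * h r := ha.rpow_mul_atomMass_le_two_mul hα.le hmono hr' (Nat.find_spec hex).le
        _ ≤ 2 * log r := by linarith [(ha.one_le_apply_le_log _ r hr').2]
  have := ha.isProbabilityMeasure
  calc _ ≤ (1 + ∑ k ∈ Finset.range (Nat.find hex), a k ^ α * atomMass h α a k +
          r ^ α * (2 * atomMass h α a (Nat.find hex))) / α :=
        setIntegral_rpow_sub_one_mul_le hα hr1 (fun _ => ENNReal.toReal_nonneg)
          (fun _ => measureReal_le_one) (fun y hy => ha.toReal_Ici_le hy.1 _)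
          (fun k hk => ⟨(ha.pos k).le, hbelow k (Finset.mem_range.1 hk)⟩)
          (fun k _ => (ha.atomMass_pos k).le) (by linarith [ha.atomMass_pos (Nat.find hex)])
    _ ≤ 7 / α * log r := by
        rw [div_mul_eq_mul_div, div_le_div_iff_of_pos_right hα]; linarith

theorem eventually_le_four (ha : IsSparseSeq h α a) (hα : 0 < α) (hmono : MonotoneOn h (Ici 0)) :
    ∀ᶠ t in atTop, t ^ α * (atomicMeasure a (atomMass h α a) (Ici t)).toReal / h t ≤ 4 := by
  filter_upwards [eventually_ge_atTop (a 0)] with t ht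
  have ht1 : 1 < t := (ha.one_lt 0).trans_le ht
  have hh : 1 ≤ h t := (ha.one_le_apply_le_log 0 t ((ha.sqrt_le 0).trans ht)).1
  have hex : ∃ n, t ≤ a n := ((ha.tendsto_atTop hα).eventually_ge_atTop t).exists
  have htail : (atomicMeasure a (atomMass h α a) (Ici t)).toReal ≤
      2 * atomMass h α a (Nat.find hex) := by
    simpa [Finset.sum_eq_zero fun k hk => if_neg (Nat.find_min hex (Finset.mem_range.1 hk))]
      using ha.toReal_Ici_le ht1 (Nat.find hex)
  have hmass : t ^ α * atomMass h α a (Nat.find hex) ≤ 2 * h t := by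
    rcases le_total t √(a (Nat.find hex)) with ht' | ht'
    · linarith [ha.rpow_mul_atomMass_le_one hα.le (zero_le_one.trans ht1.le) ht']
    · exact ha.rpow_mul_atomMass_le_two_mul hα.le hmono ht' (Nat.find_spec hex)
  rw [div_le_iff₀ (by positivity)]
  calc _ ≤ t ^ α * (2 * atomMass h α a (Nat.find hex)) :=
        mul_le_mul_of_nonneg_left htail (by positivity)
    _ ≤ 4 * h t := by linarith

theorem frequently_one_le (ha : IsSparseSeq h α a) (hα : 0 < α) :
    ∃ᶠ t in atTop, 1 ≤ t ^ α * (atomicMeasure a (atomMass h α a) (Ici t)).toReal / h t := by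
  refine (ha.tendsto_atTop hα).frequently (Eventually.frequently (Eventually.of_forall fun n => ?_))
  rw [le_div_iff₀ (zero_lt_one.trans_le (ha.one_le_apply n)), one_mul, ← ha.rpow_mul_atomMass n]
  exact mul_le_mul_of_nonneg_left
    (le_toReal_atomicMeasure_Ici (fun n => (ha.atomMass_pos n).le) ha.summable_atomMass
      (ha.one_lt n)) (rpow_nonneg (ha.pos n).le _)

theorem one_le_limsup (ha : IsSparseSeq h α a) (hα : 0 < α) (hmono : MonotoneOn h (Ici 0)) :
    1 ≤ limsup (fun t => t ^ α * (atomicMeasure a (atomMass h α a) (Ici t)).toReal / h t) atTop :=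
  le_limsup_of_frequently_le (ha.frequently_one_le hα)
    (isBoundedUnder_of_eventually_le (ha.eventually_le_four hα hmono))

end IsSparseSeq

theorem tails_optimal_general (α ρ : ℝ) (hα : 0 < α) (hρ : ρ ∈ Set.Ioo (0 : ℝ) 1)
    (h : ℝ → ℝ) (hmono : MonotoneOn h (Set.Ici (0 : ℝ)))
    (htend : Tendsto h atTop atTop)
    (hgrow : ∀ᶠ t in atTop, Real.log (h t) < ρ * min α 1 * Real.log (Real.log t)) :
    ∃ μ : Measure ℝ, IsProbabilityMeasure μ ∧ μ (Set.Iio 1) = 0 ∧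
      (∃ C > 0, ∀ r ≥ Real.exp 1,
        ∫ y in Set.Ioc (0 : ℝ) r, y ^ (α - 1) * (μ (Set.Ici y)).toReal ≤ C * Real.log r) ∧
      1 ≤ Filter.limsup (fun t => t ^ α * (μ (Set.Ici t)).toReal / h t) atTop := by
  have hq : ρ * min α 1 < 1 :=
    calc ρ * min α 1 ≤ ρ * 1 := mul_le_mul_of_nonneg_left (min_le_right α 1) hρ.1.le
      _ < 1 := by linarith [hρ.2]
  obtain ⟨a, ha⟩ := exists_isSparseSeq hα hq (eventually_one_le_and_le_log_rpow htend hgrow)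
  exact ⟨atomicMeasure a (atomMass h α a), ha.isProbabilityMeasure,
    atomicMeasure_Iio_one fun n => (ha.one_lt n).le,
    ⟨7 / α, by positivity, fun r hr => ha.setIntegral_le hα hmono hr⟩, ha.one_le_limsup hα hmono⟩

/-- Sharpness of the logarithmic error: for any increasing h → ∞ with
log h(t) < ρ min(α,1) log log t eventually (ρ ∈ (0,1)), there is a random variable X on
[1,∞) whose truncated tail integrals grow at most logarithmically while
limsup t^α P(X ≥ t)/h(t) ≥ 1. -/
theorem tails_optimal (α ρ : ℝ) (hα : 0 < α) (hρ : ρ ∈ Set.Ioo (0 : ℝ) 1)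
    (h : ℝ → ℝ) (hmono : MonotoneOn h (Set.Ici (0 : ℝ))) (hnn : ∀ t ≥ (0:ℝ), 0 ≤ h t)
    (htend : Tendsto h atTop atTop)
    (hgrow : ∀ᶠ t in atTop, Real.log (h t) < ρ * min α 1 * Real.log (Real.log t)) :
    ∃ μ : Measure ℝ, IsProbabilityMeasure μ ∧ μ (Set.Iio 1) = 0 ∧
      (∃ C > 0, ∀ r ≥ Real.exp 1,
        ∫ y in Set.Ioc (0 : ℝ) r, y ^ (α - 1) * (μ (Set.Ici y)).toReal ≤ C * Real.log r) ∧
      1 ≤ Filter.limsup (fun t => t ^ α * (μ (Set.Ici t)).toReal / h t) atTop :=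
  tails_optimal_general α ρ hα hρ h hmono htend hgrow
end

section
/- Let Z be a real random variable such that (E[|Z|^p])^{1/p} ≤ γ (α/(α − p))^{β/p} for all p ∈ (0, α), where γ, β, α > 0. Then for every t > γ e^{β/α}, P(|Z| ≥ t) ≤ (α/β)^β e^β (log(t/γ))^β (γ/t)^α. -/
open MeasureTheory Real

/-- If ‖Z‖_{L^p} ≤ γ (α/(α−p))^{β/p} for all p ∈ (0,α), then for t > γ e^{β/α},
P(|Z| ≥ t) ≤ (α/β)^β e^β (log(t/γ))^β (γ/t)^α. -/
theorem moment_to_tail_gen {Ω : Type*} [MeasurableSpace Ω] (μ : Measure Ω)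
    [IsProbabilityMeasure μ]
    (Z : Ω → ℝ) (hZ : Measurable Z) (α β γ : ℝ) (hα : 0 < α) (hβ : 0 < β) (hγ : 0 < γ)
    (hmom : ∀ p ∈ Set.Ioo 0 α,
      (∫⁻ ω, ENNReal.ofReal (|Z ω| ^ p) ∂μ) ^ (1 / p)
        ≤ ENNReal.ofReal (γ * (α / (α - p)) ^ (β / p))) :
    ∀ t > γ * Real.exp (β / α),
      (μ {ω | t ≤ |Z ω|}).toReal
        ≤ (α / β) ^ β * Real.exp β * Real.log (t / γ) ^ β * (γ / t) ^ α := by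
  intro t ht
  have ht0 : 0 < t := lt_trans (by positivity) ht
  have htγ : Real.exp (β / α) < t / γ := (lt_div_iff₀ hγ).2 (by linarith [ht])
  set L := Real.log (t / γ) with hLdef
  have hLβα : β / α < L := by
    rw [hLdef]
    exact (Real.lt_log_iff_exp_lt (by positivity)).2 htγ
  have hL : 0 < L := lt_trans (by positivity) hLβα
  set p := α - β / L with hpdef
  have hαp : α - p = β / L := by rw [hpdef]; ring
  have hp0 : 0 < p := by
    rw [hpdef, sub_pos, div_lt_iff₀ hL]
    calc β = (β / α) * α := by field_simp
    _ < L * α := by exact mul_lt_mul_of_pos_right hLβα hα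
    _ = α * L := mul_comm _ _
  have hpα : p < α := by
    rw [hpdef]
    have : 0 < β / L := by positivity
    linarith
  have hm := hmom p ⟨hp0, hpα⟩
  -- the moment bound raised to power p
  have hC0 : 0 < γ * (α / (α - p)) ^ (β / p) := by
    have : 0 < α / (α - p) := by
      exact div_pos hα (by linarith)
    positivity
  have hmp : (∫⁻ ω, ENNReal.ofReal (|Z ω| ^ p) ∂μ)
      ≤ ENNReal.ofReal ((γ * (α / (α - p)) ^ (β / p)) ^ p) := by
    have h2 := ENNReal.rpow_le_rpow hm (le_of_lt hp0)
    rwa [← ENNReal.rpow_mul, one_div_mul_cancel (ne_of_gt hp0), ENNReal.rpow_one,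
      ENNReal.ofReal_rpow_of_pos hC0] at h2
  -- Markov
  have hmeas : AEMeasurable (fun ω => ENNReal.ofReal (|Z ω| ^ p)) μ :=
    (Measurable.ennreal_ofReal (hZ.abs.pow_const p)).aemeasurable
  have hmarkov := mul_meas_ge_le_lintegral₀ hmeas (ENNReal.ofReal (t ^ p))
  have hsub : {ω | t ≤ |Z ω|} ⊆ {ω | ENNReal.ofReal (t ^ p) ≤ ENNReal.ofReal (|Z ω| ^ p)} := by
    intro ω hω
    exact ENNReal.ofReal_le_ofReal (Real.rpow_le_rpow (le_of_lt ht0) hω (le_of_lt hp0))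
  have htp0 : (0:ℝ) < t ^ p := Real.rpow_pos_of_pos ht0 p
  have hkey : μ {ω | t ≤ |Z ω|}
      ≤ ENNReal.ofReal ((γ * (α / (α - p)) ^ (β / p)) ^ p / t ^ p) := by
    have h1 : ENNReal.ofReal (t ^ p) * μ {ω | t ≤ |Z ω|}
        ≤ ENNReal.ofReal ((γ * (α / (α - p)) ^ (β / p)) ^ p) :=
      le_trans (le_trans (mul_le_mul_right (measure_mono hsub) _) hmarkov) hmp
    rw [ENNReal.ofReal_div_of_pos htp0]
    rw [ENNReal.le_div_iff_mul_le (Or.inl (ne_of_gt (ENNReal.ofReal_pos.2 htp0)))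
      (Or.inl ENNReal.ofReal_ne_top), mul_comm]
    exact h1
  refine le_trans (ENNReal.toReal_le_of_le_ofReal (by positivity) hkey) (le_of_eq ?_)
  -- real arithmetic
  have hLne : L ≠ 0 := ne_of_gt hL
  have hαpL : α / (α - p) = (α / β) * L := by
    rw [hαp]; field_simp
  have hαpPos : 0 < α - p := by rw [hαp]; positivity
  have hCp : (γ * (α / (α - p)) ^ (β / p)) ^ p
      = γ ^ p * ((α / β) ^ β * L ^ β) := by
    rw [Real.mul_rpow (le_of_lt hγ) (by positivity),
      ← Real.rpow_mul (le_of_lt (div_pos hα hαpPos)),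
      div_mul_cancel₀ β (ne_of_gt hp0), hαpL,
      Real.mul_rpow (by positivity) (le_of_lt hL)]
  have hlogγt : Real.log (γ / t) = -L := by
    rw [hLdef, Real.log_div (ne_of_gt hγ) (ne_of_gt ht0),
      Real.log_div (ne_of_gt ht0) (ne_of_gt hγ)]
    ring
  have hpL : p * L = α * L - β := by rw [hpdef]; field_simp
  have hexp : (γ / t) ^ p = Real.exp β * (γ / t) ^ α := by
    rw [Real.rpow_def_of_pos (div_pos hγ ht0), Real.rpow_def_of_pos (div_pos hγ ht0),
      hlogγt, ← Real.exp_add]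
    congr 1
    have hLp : L * p = α * L - β := by rw [mul_comm]; exact hpL
    rw [neg_mul, neg_mul, hLp]
    ring
  have hdiv : γ ^ p / t ^ p = (γ / t) ^ p := (Real.div_rpow (le_of_lt hγ) (le_of_lt ht0) p).symm
  rw [hCp, mul_div_right_comm, hdiv, hexp]
  ring
end

section
/- Let X₁, …, Xₙ be independent centered random variables with P(|Xᵢ| ≥ t) ≤ t^{−α} for t ≥ 1, where α > 2, and let a₁, …, aₙ be real coefficients. Then there is a constant C_α depending only on α such that for all p ∈ [2, α), (E[|∑ᵢ aᵢ Xᵢ|^p])^{1/p} ≤ C_α (∑ᵢ aᵢ²)^{1/2} (α/(α − p))^{1/p}. -/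
/-!
Normalise so that `∑ aᵢ² = 1`; the tail hypothesis bounds every `Var Xᵢ` by a constant `σ²`
depending on `α`. To bound `P(|∑ aᵢ Xᵢ| ≥ t)` for large `t`, truncate each `aᵢ Xᵢ` at
`y = t / (8α)`. Some term exceeds `y` with probability at most `∑ |aᵢ|^α y^(-α) ≤ (8α)^α t^(-α)`;
recentring the truncated terms moves the sum by at most `σ² / y ≤ t / 2`; and Bernstein's
inequality with `λ = 4α log t / t` bounds the probability that the recentred truncated sum
exceeds `t / 2` by `2 t^(-α)` once `t ≥ (32ασ²)²`. This Fuk–Nagaev-type inequality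
`P(|∑ aᵢ Xᵢ| ≥ t) ≤ K_α t^(-α)` integrated against `p t^(p-1)` gives
`E |∑ aᵢ Xᵢ|^p ≤ K_α^(p/α) α / (α - p)`.
-/

open MeasureTheory Real ProbabilityTheory Set

theorem Real.exp_le_one_add_add_sq_mul_exp {x c : ℝ} (hxc : x ≤ c) (hc : 0 ≤ c) :
    exp x ≤ 1 + x + x ^ 2 * exp c := by
  suffices exp x ≤ 1 + x + x ^ 2 * exp (max x 0) by
    have : x ^ 2 * exp (max x 0) ≤ x ^ 2 * exp c := by gcongr; exact max_le hxc hc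
    linarith
  rcases le_total 0 x with hx | hx
  · -- `exp x - 1 ≤ x exp x`, applied twice
    have h : exp x - 1 ≤ x * exp x := by
      have := mul_le_mul_of_nonneg_right (add_one_le_exp (-x)) (exp_pos x).le
      rw [← exp_add, neg_add_cancel, exp_zero] at this
      linarith
    rw [max_eq_left hx]
    nlinarith [exp_pos x]
  · rw [max_eq_right hx, exp_zero, mul_one]
    rcases le_total x (-1) with hx1 | hx1
    · nlinarith [exp_le_one_iff.mpr hx]
    · linarith [(abs_le.mp (abs_exp_sub_one_sub_id_le (abs_le.mpr ⟨hx1, by linarith⟩))).2]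

theorem Real.mul_log_le_of_sq_le {c t : ℝ} (hc : 0 ≤ c) (ht : (2 * c) ^ 2 ≤ t) :
    c * log t ≤ t := by
  have ht0 : 0 ≤ t := (sq_nonneg _).trans ht
  have hsqrt : 2 * c ≤ √t := by
    simpa [sqrt_sq (by positivity : 0 ≤ 2 * c)] using sqrt_le_sqrt ht
  have hlog : log t ≤ 2 * √t := by
    have := log_le_rpow_div ht0 (ε := 1 / 2) (by norm_num)
    rwa [← sqrt_eq_rpow, div_div_eq_mul_div, div_one, mul_comm] at this
  calc c * log t ≤ c * (2 * √t) := mul_le_mul_of_nonneg_left hlog hc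
    _ ≤ √t * √t := by nlinarith [sqrt_nonneg t]
    _ = t := mul_self_sqrt ht0

theorem Real.exp_sq_mul_sub_le_rpow_neg {α s t : ℝ} (hα : 0 < α) (hs : 0 ≤ s) (ht1 : 1 ≤ t)
    (hts : (32 * α * s) ^ 2 ≤ t) :
    exp ((4 * α * log t / t) ^ 2 * s * t - 4 * α * log t / t * (t / 2)) ≤ t ^ (-α) := by
  have ht0 : 0 < t := one_pos.trans_le ht1
  have hlog : 16 * α * s * log t ≤ t := mul_log_le_of_sq_le (by positivity) (by linarith)
  rw [rpow_def_of_pos ht0, exp_le_exp]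
  have hquad : (4 * α * log t / t) ^ 2 * s * t = α * log t * (16 * α * s * log t / t) := by
    field_simp; ring
  have hlin : 4 * α * log t / t * (t / 2) = 2 * α * log t := by field_simp; ring
  rw [hquad, hlin]
  nlinarith [mul_le_mul_of_nonneg_left ((div_le_one ht0).mpr hlog)
    (mul_nonneg hα.le (log_nonneg ht1))]

theorem lintegral_Ioc_rpow_sub_one {T q : ℝ} (hT : 0 ≤ T) (hq : 0 < q) :
    ∫⁻ t in Ioc 0 T, ENNReal.ofReal (t ^ (q - 1)) = ENNReal.ofReal (T ^ q / q) := by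
  have hint : IntegrableOn (fun t : ℝ => t ^ (q - 1)) (Ioc 0 T) :=
    (intervalIntegrable_iff_integrableOn_Ioc_of_le hT).mp
      (intervalIntegral.intervalIntegrable_rpow' (by linarith))
  rw [← ofReal_integral_eq_lintegral_ofReal hint
    ((ae_restrict_mem measurableSet_Ioc).mono fun t ht => rpow_nonneg ht.1.le _),
    ← intervalIntegral.integral_of_le hT, integral_rpow (Or.inl (by linarith)),
    sub_add_cancel, zero_rpow hq.ne', sub_zero]

theorem lintegral_Ioi_rpow {T r : ℝ} (hT : 0 < T) (hr : r < -1) :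
    ∫⁻ t in Ioi T, ENNReal.ofReal (t ^ r) = ENNReal.ofReal (-T ^ (r + 1) / (r + 1)) := by
  rw [← ofReal_integral_eq_lintegral_ofReal (integrableOn_Ioi_rpow_of_lt hr hT)
    ((ae_restrict_mem measurableSet_Ioi).mono fun t ht => rpow_nonneg (hT.trans ht).le _),
    integral_Ioi_rpow_of_lt hr hT]

theorem lintegral_Ioi_mul_rpow_sub_one_le {g : ℝ → ENNReal} {K α q : ℝ} (hK : 0 < K)
    (hq : 0 < q) (hqα : q < α) (hg : ∀ t, g t ≤ 1)
    (hgK : ∀ t > 0, g t ≤ ENNReal.ofReal (K * t ^ (-α))) :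
    ENNReal.ofReal q * ∫⁻ t in Ioi 0, g t * ENNReal.ofReal (t ^ (q - 1))
      ≤ ENNReal.ofReal (K ^ (q / α) * (α / (α - q))) := by
  have hα : 0 < α := hq.trans hqα
  -- split at the level `T` where the two bounds on `g` cross
  set T := K ^ α⁻¹
  have hT : 0 < T := rpow_pos_of_pos hK _
  have hTα : T ^ α = K := rpow_inv_rpow hK.le hα.ne'
  have hlow : ∫⁻ t in Ioc 0 T, g t * ENNReal.ofReal (t ^ (q - 1)) ≤ ENNReal.ofReal (T ^ q / q) :=
    (lintegral_mono fun t => mul_le_of_le_one_left' (hg t)).trans_eq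
      (lintegral_Ioc_rpow_sub_one hT.le hq)
  have hhigh : ∫⁻ t in Ioi T, g t * ENNReal.ofReal (t ^ (q - 1))
      ≤ ENNReal.ofReal K * ENNReal.ofReal (T ^ (q - α) / (α - q)) := by
    calc ∫⁻ t in Ioi T, g t * ENNReal.ofReal (t ^ (q - 1))
        ≤ ∫⁻ t in Ioi T, ENNReal.ofReal K * ENNReal.ofReal (t ^ (q - 1 - α)) := by
          refine setLIntegral_mono' measurableSet_Ioi fun t ht => ?_
          have ht0 : 0 < t := hT.trans ht
          rw [← ENNReal.ofReal_mul hK.le]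
          refine (mul_le_mul_left (hgK t ht0) _).trans_eq ?_
          rw [← ENNReal.ofReal_mul (by positivity), mul_assoc, ← rpow_add ht0]
          ring_nf
      _ = ENNReal.ofReal K * ENNReal.ofReal (T ^ (q - α) / (α - q)) := by
          rw [lintegral_const_mul' _ _ ENNReal.ofReal_ne_top, lintegral_Ioi_rpow hT (by linarith),
            show q - 1 - α + 1 = q - α by ring, neg_div, ← div_neg, neg_sub]
  rw [← Ioc_union_Ioi_eq_Ioi hT.le, lintegral_union measurableSet_Ioi (Ioc_disjoint_Ioi le_rfl)]
  refine (mul_le_mul_right (add_le_add hlow hhigh) _).trans_eq ?_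
  rw [← ENNReal.ofReal_mul hK.le, ← ENNReal.ofReal_add (by positivity) (by positivity),
    ← ENNReal.ofReal_mul hq.le]
  congr 1
  have hKT : K * T ^ (q - α) = T ^ q := by rw [rpow_sub hT, hTα]; field_simp
  have hαq : α - q ≠ 0 := by linarith
  rw [← mul_div_assoc, hKT, ← rpow_mul hK.le, inv_mul_eq_div]
  field_simp
  ring

section Chernoff

variable {Ω : Type*} [MeasurableSpace Ω] {μ : Measure Ω} [IsProbabilityMeasure μ]

theorem mgf_le_exp_variance {V : Ω → ℝ} {b l : ℝ} (hV : MemLp V 2 μ) (hcen : μ[V] = 0)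
    (hb : ∀ᵐ ω ∂μ, V ω ≤ b) (hl : 0 ≤ l) :
    mgf V μ l ≤ exp (l ^ 2 * Var[V; μ] * exp (l * b)) := by
  have hVint : Integrable V μ := hV.integrable one_le_two
  have hb0 : 0 ≤ b := by
    simpa [hcen] using integral_mono_ae hVint (integrable_const b) hb
  have hpoint : ∀ᵐ ω ∂μ, exp (l * V ω) ≤ 1 + l * V ω + (l ^ 2 * exp (l * b)) * V ω ^ 2 := by
    filter_upwards [hb] with ω hω
    have := exp_le_one_add_add_sq_mul_exp (mul_le_mul_of_nonneg_left hω hl) (mul_nonneg hl hb0)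
    linarith
  have hexp_int : Integrable (fun ω => exp (l * V ω)) μ := by
    refine Integrable.of_bound (hVint.aemeasurable.const_mul l).exp.aestronglyMeasurable
      (exp (l * b)) ?_
    filter_upwards [hb] with ω hω
    rw [norm_of_nonneg (exp_pos _).le]
    exact exp_le_exp.mpr (mul_le_mul_of_nonneg_left hω hl)
  have hlin_int : Integrable (fun ω => 1 + l * V ω) μ :=
    (integrable_const 1).add (hVint.const_mul l)
  have hsq_int : Integrable (fun ω => (l ^ 2 * exp (l * b)) * V ω ^ 2) μ :=
    hV.integrable_sq.const_mul _
  calc mgf V μ l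
      ≤ ∫ ω, (1 + l * V ω + (l ^ 2 * exp (l * b)) * V ω ^ 2) ∂μ :=
        integral_mono_ae hexp_int (hlin_int.add hsq_int) hpoint
    _ = 1 + l ^ 2 * Var[V; μ] * exp (l * b) := by
        rw [integral_add hlin_int hsq_int, integral_add (integrable_const 1) (hVint.const_mul l),
          integral_const_mul, integral_const_mul, hcen,
          variance_of_integral_eq_zero hVint.aemeasurable hcen]
        simp only [integral_const, probReal_univ, smul_eq_mul, mul_zero, add_zero]
        ring
    _ ≤ exp (l ^ 2 * Var[V; μ] * exp (l * b)) := add_one_le_exp _ |>.trans_eq' (add_comm _ _)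


theorem measureReal_sum_ge_le_of_iIndepFun {ι : Type*} [Fintype ι] {V : ι → Ω → ℝ}
    (hind : iIndepFun V μ) (hV : ∀ i, MemLp (V i) 2 μ) (hcen : ∀ i, μ[V i] = 0)
    {b s l : ℝ} (hb : ∀ i, ∀ᵐ ω ∂μ, V i ω ≤ b) (hs : ∑ i, Var[V i; μ] ≤ s) (hl : 0 ≤ l)
    (u : ℝ) :
    μ.real {ω | u ≤ ∑ i, V i ω} ≤ exp (l ^ 2 * s * exp (l * b) - l * u) := by
  have hVm : ∀ i, AEMeasurable (V i) μ := fun i => (hV i).aestronglyMeasurable.aemeasurable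
  have hsum_le : ∀ᵐ ω ∂μ, ∑ i, V i ω ≤ Fintype.card ι * b := by
    filter_upwards [ae_all_iff.mpr hb] with ω hω
    exact (Finset.sum_le_sum fun i _ => hω i).trans_eq (by simp)
  have hint : Integrable (fun ω => exp (l * ∑ i, V i ω)) μ := by
    refine Integrable.of_bound ?_ (exp (l * (Fintype.card ι * b))) ?_
    · exact ((Finset.aemeasurable_fun_sum _ fun i _ => hVm i).const_mul l).exp.aestronglyMeasurable
    · filter_upwards [hsum_le] with ω hω
      rw [norm_of_nonneg (exp_pos _).le]
      exact exp_le_exp.mpr (mul_le_mul_of_nonneg_left hω hl)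
  have hmgf : mgf (fun ω => ∑ i, V i ω) μ l ≤ exp (l ^ 2 * s * exp (l * b)) :=
    calc mgf (fun ω => ∑ i, V i ω) μ l = ∏ i, mgf (V i) μ l := by
          rw [← hind.mgf_sum₀ hVm, Finset.sum_fn]
      _ ≤ ∏ i, exp (l ^ 2 * Var[V i; μ] * exp (l * b)) :=
          Finset.prod_le_prod (fun i _ => mgf_nonneg) fun i _ =>
            mgf_le_exp_variance (hV i) (hcen i) (hb i) hl
      _ = exp (l ^ 2 * (∑ i, Var[V i; μ]) * exp (l * b)) := by
          rw [← exp_sum, Finset.mul_sum, Finset.sum_mul]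
      _ ≤ exp (l ^ 2 * s * exp (l * b)) := by gcongr
  calc μ.real {ω | u ≤ ∑ i, V i ω}
      ≤ exp (-l * u) * mgf (fun ω => ∑ i, V i ω) μ l := measure_ge_le_exp_mul_mgf u hl hint
    _ ≤ exp (-l * u) * exp (l ^ 2 * s * exp (l * b)) := by gcongr
    _ = exp (l ^ 2 * s * exp (l * b) - l * u) := by rw [← exp_add]; ring_nf

theorem measureReal_abs_sum_ge_le_of_iIndepFun {ι : Type*} [Fintype ι] {V : ι → Ω → ℝ}
    (hind : iIndepFun V μ) (hV : ∀ i, MemLp (V i) 2 μ) (hcen : ∀ i, μ[V i] = 0)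
    {b s l : ℝ} (hb : ∀ i, ∀ᵐ ω ∂μ, |V i ω| ≤ b) (hs : ∑ i, Var[V i; μ] ≤ s) (hl : 0 ≤ l)
    (u : ℝ) :
    μ.real {ω | u ≤ |∑ i, V i ω|} ≤ 2 * exp (l ^ 2 * s * exp (l * b) - l * u) := by
  have hupper := measureReal_sum_ge_le_of_iIndepFun hind hV hcen
    (fun i => (hb i).mono fun ω hω => (abs_le.mp hω).2) hs hl u
  have hlower := measureReal_sum_ge_le_of_iIndepFun (V := fun i ω => -V i ω)
    (hind.comp (fun _ x => -x) fun _ => measurable_neg) (fun i => (hV i).neg)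
    (fun i => by simp [integral_neg, hcen i])
    (fun i => (hb i).mono fun ω hω => neg_le.mp (abs_le.mp hω).1)
    (by simpa [variance_fun_neg] using hs) hl u
  have hsplit : {ω | u ≤ |∑ i, V i ω|} ⊆ {ω | u ≤ ∑ i, V i ω} ∪ {ω | u ≤ ∑ i, -V i ω} := by
    intro ω hω
    simpa [Finset.sum_neg_distrib, le_abs] using hω
  calc μ.real {ω | u ≤ |∑ i, V i ω|}
      ≤ μ.real {ω | u ≤ ∑ i, V i ω} + μ.real {ω | u ≤ ∑ i, -V i ω} :=
        (measureReal_mono hsplit).trans (measureReal_union_le _ _)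
    _ ≤ 2 * exp (l ^ 2 * s * exp (l * b) - l * u) := by linarith

end Chernoff

section Truncation

theorem abs_truncation_sub_le {β : Type*} (f : β → ℝ) {A : ℝ} (hA : 0 < A) (x : β) :
    |truncation f A x - f x| ≤ f x ^ 2 / A := by
  by_cases h : f x ∈ Ioc (-A) A
  · simp only [truncation, Function.comp_apply, indicator_of_mem h, id, sub_self, abs_zero]
    positivity
  · have hAf : A ≤ |f x| := by
      rw [mem_Ioc, not_and_or, not_lt, not_le] at h
      rcases h with h | h
      · exact le_abs.mpr (Or.inr (by linarith))
      · exact le_abs.mpr (Or.inl h.le)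
    simp only [truncation, Function.comp_apply, indicator_of_notMem h, zero_sub, abs_neg]
    rw [le_div_iff₀ hA, ← sq_abs]
    nlinarith [abs_nonneg (f x)]

variable {Ω : Type*} [MeasurableSpace Ω] {μ : Measure Ω} [IsProbabilityMeasure μ]

theorem abs_integral_truncation_le {Y : Ω → ℝ} (hY : MemLp Y 2 μ) (hcen : μ[Y] = 0) {A : ℝ}
    (hA : 0 < A) :
    |μ[truncation Y A]| ≤ Var[Y; μ] / A := by
  have hYint := hY.integrable one_le_two
  have htr_int := hY.aestronglyMeasurable.integrable_truncation (μ := μ) (A := A)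
  calc |μ[truncation Y A]| = |∫ ω, (truncation Y A ω - Y ω) ∂μ| := by
        rw [integral_sub htr_int hYint, hcen, sub_zero]
    _ ≤ ∫ ω, Y ω ^ 2 / A ∂μ :=
        abs_integral_le_integral_abs.trans <| integral_mono (htr_int.sub hYint).abs
          (hY.integrable_sq.div_const A) (abs_truncation_sub_le Y hA)
    _ = Var[Y; μ] / A := by
        rw [integral_div, variance_of_integral_eq_zero hYint.aemeasurable hcen]

theorem variance_truncation_le {Y : Ω → ℝ} (hY : MemLp Y 2 μ) (hcen : μ[Y] = 0) (A : ℝ) :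
    Var[truncation Y A; μ] ≤ Var[Y; μ] := by
  have hYm := hY.aestronglyMeasurable
  calc Var[truncation Y A; μ] ≤ μ[truncation Y A ^ 2] := variance_le_expectation_sq hYm.truncation
    _ ≤ μ[Y ^ 2] := by
        refine integral_mono (hYm.memLp_truncation.integrable_sq) hY.integrable_sq fun ω => ?_
        simpa only [Pi.pow_apply, sq_abs] using
          pow_le_pow_left₀ (abs_nonneg _) (abs_truncation_le_abs_self Y A ω) 2
    _ = Var[Y; μ] := (variance_of_integral_eq_zero hYm.aemeasurable hcen).symm

-- Truncate at level `y`, recentre, and apply Bernstein's inequality to the truncated parts;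
-- the recentring costs at most `s / y`.
theorem measureReal_abs_sum_ge_le_of_iIndepFun_of_truncation {ι : Type*} [Fintype ι]
    {Y : ι → Ω → ℝ} (hind : iIndepFun Y μ) (hY : ∀ i, MemLp (Y i) 2 μ) (hcen : ∀ i, μ[Y i] = 0)
    {s y l : ℝ} (hs : ∑ i, Var[Y i; μ] ≤ s) (hy : 0 < y) (hl : 0 ≤ l) (u : ℝ) :
    μ.real {ω | u + s / y ≤ |∑ i, Y i ω|}
      ≤ ∑ i, μ.real {ω | y ≤ |Y i ω|} + 2 * exp (l ^ 2 * s * exp (l * (2 * y)) - l * u) := by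
  set m : ι → ℝ := fun i => μ[truncation (Y i) y]
  set V : ι → Ω → ℝ := fun i ω => truncation (Y i) y ω - m i
  have hYm : ∀ i, AEStronglyMeasurable (Y i) μ := fun i => (hY i).aestronglyMeasurable
  have hm : ∀ i, |m i| ≤ y := fun i => by
    simpa [abs_of_pos hy] using norm_integral_le_of_norm_le_const
      (ae_of_all μ fun ω => (norm_eq_abs _).trans_le (abs_truncation_le_bound (Y i) y ω))
  have hVind : iIndepFun V μ :=
    hind.comp (fun i x => indicator (Ioc (-y) y) id x - m i)
      fun i => (measurable_id.indicator measurableSet_Ioc).sub_const _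
  have hVcen : ∀ i, μ[V i] = 0 := fun i => by
    simp [V, integral_sub (hYm i).integrable_truncation (integrable_const (m i)), m]
  have hVbd : ∀ i, ∀ᵐ ω ∂μ, |V i ω| ≤ 2 * y := fun i => ae_of_all μ fun ω =>
    (abs_sub _ _).trans (by linarith [abs_truncation_le_bound (Y i) y ω, hm i, abs_of_pos hy])
  have hVvar : ∑ i, Var[V i; μ] ≤ s := hs.trans' <| Finset.sum_le_sum fun i _ => by
    rw [variance_sub_const (hYm i).truncation]
    exact variance_truncation_le (hY i) (hcen i) y
  have hmsum : |∑ i, m i| ≤ s / y := by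
    calc |∑ i, m i| ≤ ∑ i, Var[Y i; μ] / y :=
          (Finset.abs_sum_le_sum_abs _ _).trans <| Finset.sum_le_sum fun i _ =>
            abs_integral_truncation_le (hY i) (hcen i) hy
      _ ≤ s / y := by rw [← Finset.sum_div]; gcongr
  have hsplit : {ω | u + s / y ≤ |∑ i, Y i ω|}
      ⊆ (⋃ i, {ω | y ≤ |Y i ω|}) ∪ {ω | u ≤ |∑ i, V i ω|} := by
    intro ω hω
    by_cases hbig : ∃ i, y ≤ |Y i ω|
    · exact Or.inl (mem_iUnion.mpr hbig)
    · push Not at hbig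
      have hsum : ∑ i, Y i ω = ∑ i, V i ω + ∑ i, m i := by
        simp [V, truncation_eq_self (hbig _)]
      right
      simp only [mem_ofPred_eq, hsum] at hω ⊢
      linarith [abs_add_le (∑ i, V i ω) (∑ i, m i)]
  calc μ.real {ω | u + s / y ≤ |∑ i, Y i ω|}
      ≤ μ.real (⋃ i, {ω | y ≤ |Y i ω|}) + μ.real {ω | u ≤ |∑ i, V i ω|} :=
        (measureReal_mono hsplit).trans (measureReal_union_le _ _)
    _ ≤ _ := add_le_add (measureReal_iUnion_fintype_le _) <|
        measureReal_abs_sum_ge_le_of_iIndepFun hVind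
          (fun i => (hYm i).memLp_truncation.sub (memLp_const _)) hVcen hVbd hVvar hl u

end Truncation

section PowerTail

variable {Ω : Type*} [MeasurableSpace Ω]

def HasPowerTail (μ : Measure Ω) (f : Ω → ℝ) (K α : ℝ) : Prop :=
  ∀ t > 0, μ.real {ω | t ≤ |f ω|} ≤ K * t ^ (-α)

namespace HasPowerTail

variable {μ : Measure Ω} {f : Ω → ℝ} {K α : ℝ}

theorem nonneg (h : HasPowerTail μ f K α) : 0 ≤ K := by
  simpa using (measureReal_nonneg).trans (h 1 one_pos)

theorem mono (h : HasPowerTail μ f K α) {K' : ℝ} (hK : K ≤ K') : HasPowerTail μ f K' α :=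
  fun t ht => (h t ht).trans (by gcongr)

theorem const_mul (h : HasPowerTail μ f K α) (c : ℝ) :
    HasPowerTail μ (fun ω => c * f ω) (|c| ^ α * K) α := by
  intro t ht
  rcases eq_or_ne c 0 with rfl | hc
  · simpa [not_le.mpr ht] using
      mul_nonneg (mul_nonneg (rpow_nonneg le_rfl α) h.nonneg) (rpow_nonneg ht.le (-α))
  have hc' : 0 < |c| := abs_pos.mpr hc
  have hset : {ω | t ≤ |c * f ω|} = {ω | t / |c| ≤ |f ω|} := by
    ext ω
    simp only [mem_ofPred_eq, abs_mul, div_le_iff₀ hc', mul_comm]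
  calc μ.real {ω | t ≤ |c * f ω|} ≤ K * (t / |c|) ^ (-α) := hset ▸ h _ (div_pos ht hc')
    _ = |c| ^ α * K * t ^ (-α) := by
        rw [div_rpow ht.le hc'.le, rpow_neg hc'.le, div_inv_eq_mul]
        ring

theorem of_forall_ge [IsZeroOrProbabilityMeasure μ] {T : ℝ} (hT : 0 < T) (hα : 0 ≤ α)
    (hK : 0 ≤ K) (h : ∀ t ≥ T, μ.real {ω | t ≤ |f ω|} ≤ K * t ^ (-α)) :
    HasPowerTail μ f (K + T ^ α) α := by
  intro t ht
  rcases le_or_gt T t with hTt | htT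
  · exact (h t hTt).trans (by gcongr; exact le_add_of_nonneg_right (by positivity))
  · calc μ.real {ω | t ≤ |f ω|} ≤ 1 := measureReal_le_one
      _ ≤ (T / t) ^ α := one_le_rpow ((one_le_div ht).mpr htT.le) hα
      _ = T ^ α * t ^ (-α) := by rw [div_rpow hT.le ht.le, rpow_neg ht.le, div_eq_mul_inv]
      _ ≤ (K + T ^ α) * t ^ (-α) := by gcongr; linarith

theorem lintegral_rpow_le [IsZeroOrProbabilityMeasure μ] (h : HasPowerTail μ f K α)
    (hf : AEMeasurable f μ) {q : ℝ} (hq : 0 < q) (hqα : q < α) :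
    ∫⁻ ω, ENNReal.ofReal (|f ω| ^ q) ∂μ ≤ ENNReal.ofReal (K ^ (q / α) * (α / (α - q))) := by
  have hμ : ∀ t > 0, μ {ω | t ≤ |f ω|} ≤ ENNReal.ofReal (K * t ^ (-α)) := fun t ht => by
    rw [← ofReal_measureReal]
    exact ENNReal.ofReal_le_ofReal (h t ht)
  rw [lintegral_rpow_eq_lintegral_meas_le_mul μ (ae_of_all μ fun ω => abs_nonneg (f ω))
    hf.abs hq]
  rcases h.nonneg.eq_or_lt with hK | hK
  · have hzero : ∫⁻ t in Ioi 0, μ {ω | t ≤ |f ω|} * ENNReal.ofReal (t ^ (q - 1)) = 0 := by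
      refine (setLIntegral_congr_fun measurableSet_Ioi fun t ht => ?_).trans lintegral_zero
      simp [show μ {ω | t ≤ |f ω|} = 0 by simpa [← hK] using hμ t ht]
    simp [hzero]
  · exact lintegral_Ioi_mul_rpow_sub_one_le hK hq hqα (fun _ => prob_le_one) hμ

theorem lintegral_rpow_rpow_le [IsZeroOrProbabilityMeasure μ] (h : HasPowerTail μ f K α)
    (hf : AEMeasurable f μ) {q : ℝ} (hq : 0 < q) (hqα : q < α) :
    (∫⁻ ω, ENNReal.ofReal (|f ω| ^ q) ∂μ) ^ (1 / q)
      ≤ ENNReal.ofReal (K ^ (1 / α) * (α / (α - q)) ^ (1 / q)) := by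
  have hα : 0 < α := hq.trans hqα
  have hA : 0 ≤ α / (α - q) := div_nonneg hα.le (by linarith)
  refine (ENNReal.rpow_le_rpow (h.lintegral_rpow_le hf hq hqα) (by positivity)).trans_eq ?_
  rw [ENNReal.ofReal_rpow_of_nonneg (mul_nonneg (rpow_nonneg h.nonneg _) hA) (by positivity),
    mul_rpow (rpow_nonneg h.nonneg _) hA, ← rpow_mul h.nonneg]
  congr 3
  field_simp

theorem lintegral_sq_le [IsZeroOrProbabilityMeasure μ] (h : HasPowerTail μ f K α)
    (hf : AEMeasurable f μ) (hα : 2 < α) :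
    ∫⁻ ω, ENNReal.ofReal (f ω ^ 2) ∂μ ≤ ENNReal.ofReal (K ^ (2 / α) * (α / (α - 2))) := by
  simpa [rpow_two] using h.lintegral_rpow_le hf two_pos hα

theorem memLp_two [IsZeroOrProbabilityMeasure μ] (h : HasPowerTail μ f K α)
    (hf : AEStronglyMeasurable f μ) (hα : 2 < α) : MemLp f 2 μ := by
  refine (memLp_two_iff_integrable_sq hf).mpr ⟨hf.pow 2, ?_⟩
  rw [hasFiniteIntegral_iff_ofReal (ae_of_all μ fun ω => sq_nonneg (f ω))]
  exact (h.lintegral_sq_le hf.aemeasurable hα).trans_lt ENNReal.ofReal_lt_top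

theorem variance_le [IsProbabilityMeasure μ] (h : HasPowerTail μ f K α)
    (hf : AEStronglyMeasurable f μ) (hα : 2 < α) :
    Var[f; μ] ≤ K ^ (2 / α) * (α / (α - 2)) := by
  refine (variance_le_expectation_sq hf).trans ?_
  simp only [Pi.pow_apply]
  rw [integral_eq_lintegral_of_nonneg_ae (ae_of_all μ fun ω => sq_nonneg (f ω)) (hf.pow 2)]
  exact ENNReal.toReal_le_of_le_ofReal (mul_nonneg (rpow_nonneg h.nonneg _)
    (div_nonneg (by linarith) (by linarith))) (h.lintegral_sq_le hf.aemeasurable hα)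

end HasPowerTail

/-- Beyond the level `max 1 ((32 * α * s) ^ 2)` the Bernstein part of the Fuk–Nagaev bound is
below `2 * t ^ (-α)`; below it the trivial bound `1` is used. -/
noncomputable def fukNagaevConst (α s c : ℝ) : ℝ :=
  (8 * α) ^ α * c + 2 + max 1 ((32 * α * s) ^ 2) ^ α

variable {μ : Measure Ω} [IsProbabilityMeasure μ] {ι : Type*} [Fintype ι]

theorem HasPowerTail.sum_of_iIndepFun {Y : ι → Ω → ℝ} {c : ι → ℝ} {s α : ℝ}
    (hind : iIndepFun Y μ) (hY : ∀ i, MemLp (Y i) 2 μ) (hcen : ∀ i, μ[Y i] = 0)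
    (htail : ∀ i, HasPowerTail μ (Y i) (c i) α) (hs : ∑ i, Var[Y i; μ] ≤ s) (hα : 0 < α) :
    HasPowerTail μ (fun ω => ∑ i, Y i ω) (fukNagaevConst α s (∑ i, c i)) α := by
  have hs0 : 0 ≤ s := (Finset.sum_nonneg fun i _ => variance_nonneg _ _).trans hs
  have hc0 : 0 ≤ ∑ i, c i := Finset.sum_nonneg fun i _ => (htail i).nonneg
  refine of_forall_ge (lt_max_of_lt_left one_pos) hα.le (by positivity) fun t ht => ?_
  have ht1 : 1 ≤ t := (le_max_left _ _).trans ht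
  have ht0 : 0 < t := one_pos.trans_le ht1
  have hts : (32 * α * s) ^ 2 ≤ t := (le_max_right _ _).trans ht
  -- truncation level and Bernstein parameter, tuned so that `l * (2 * y) = log t`
  set y := t / (8 * α)
  set l := 4 * α * log t / t
  have hy : 0 < y := by positivity
  have hl : 0 ≤ l := div_nonneg (mul_nonneg (by positivity) (log_nonneg ht1)) ht0.le
  have hcorr : s / y ≤ t / 2 := by
    have hαs : 32 * α * s ≤ t := by nlinarith [mul_nonneg hα.le hs0]
    simp only [y]
    rw [div_div_eq_mul_div, div_le_div_iff₀ ht0 two_pos]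
    nlinarith
  have hexp : exp (l ^ 2 * s * exp (l * (2 * y)) - l * (t / 2)) ≤ t ^ (-α) := by
    have hly : l * (2 * y) = log t := by simp only [l, y]; field_simp; ring
    rw [hly, exp_log ht0]
    exact exp_sq_mul_sub_le_rpow_neg hα hs0 ht1 hts
  have hsmall : ∑ i, μ.real {ω | y ≤ |Y i ω|} ≤ (8 * α) ^ α * (∑ i, c i) * t ^ (-α) := by
    have hyα : y ^ (-α) = (8 * α) ^ α * t ^ (-α) := by
      rw [div_rpow ht0.le (by positivity), rpow_neg ht0.le, rpow_neg (by positivity),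
        div_eq_mul_inv, inv_inv, mul_comm]
    calc ∑ i, μ.real {ω | y ≤ |Y i ω|} ≤ ∑ i, c i * y ^ (-α) :=
          Finset.sum_le_sum fun i _ => htail i y hy
      _ = (8 * α) ^ α * (∑ i, c i) * t ^ (-α) := by rw [← Finset.sum_mul, hyα]; ring
  calc μ.real {ω | t ≤ |∑ i, Y i ω|} ≤ μ.real {ω | t / 2 + s / y ≤ |∑ i, Y i ω|} :=
        measureReal_mono fun ω hω => by simp only [mem_ofPred_eq] at hω ⊢; linarith
    _ ≤ ∑ i, μ.real {ω | y ≤ |Y i ω|} + 2 * exp (l ^ 2 * s * exp (l * (2 * y)) - l * (t / 2)) :=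
        measureReal_abs_sum_ge_le_of_iIndepFun_of_truncation hind hY hcen hs hy hl _
    _ ≤ (8 * α) ^ α * (∑ i, c i) * t ^ (-α) + 2 * t ^ (-α) := by gcongr
    _ = ((8 * α) ^ α * (∑ i, c i) + 2) * t ^ (-α) := by ring

theorem HasPowerTail.sum_mul_of_iIndepFun_of_sum_sq_le_one {X : ι → Ω → ℝ} {K α : ℝ}
    (hind : iIndepFun X μ) (hXm : ∀ i, AEStronglyMeasurable (X i) μ) (hcen : ∀ i, μ[X i] = 0)
    (htail : ∀ i, HasPowerTail μ (X i) K α) (hK : 0 ≤ K) (hα : 2 < α) {b : ι → ℝ}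
    (hb : ∑ i, b i ^ 2 ≤ 1) :
    HasPowerTail μ (fun ω => ∑ i, b i * X i ω)
      (fukNagaevConst α (K ^ (2 / α) * (α / (α - 2))) K) α := by
  set σ2 := K ^ (2 / α) * (α / (α - 2))
  have hσ2 : 0 ≤ σ2 := mul_nonneg (rpow_nonneg hK _) (div_nonneg (by linarith) (by linarith))
  have hb1 : ∀ i, |b i| ≤ 1 := fun i => (sq_le_one_iff_abs_le_one _).mp <|
    (Finset.single_le_sum (fun j _ => sq_nonneg (b j)) (Finset.mem_univ i)).trans hb
  have hvar : ∑ i, Var[fun ω => b i * X i ω; μ] ≤ σ2 := by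
    simp only [variance_const_mul]
    calc ∑ i, b i ^ 2 * Var[X i; μ] ≤ ∑ i, b i ^ 2 * σ2 := by
          gcongr with i
          exact (htail i).variance_le (hXm i) hα
      _ ≤ σ2 := by rw [← Finset.sum_mul]; exact mul_le_of_le_one_left hσ2 hb
  have htail_sum : ∑ i, |b i| ^ α * K ≤ K :=
    calc ∑ i, |b i| ^ α * K ≤ ∑ i, b i ^ 2 * K := by
          gcongr with i
          simpa [rpow_two] using
            rpow_le_rpow_of_exponent_ge' (abs_nonneg _) (hb1 i) zero_le_two hα.le
      _ ≤ K := by rw [← Finset.sum_mul]; exact mul_le_of_le_one_left hK hb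
  refine (HasPowerTail.sum_of_iIndepFun (Y := fun i ω => b i * X i ω)
    (hind.comp (fun i x => b i * x) fun i => measurable_const_mul (b i))
    (fun i => ((htail i).memLp_two (hXm i) hα).const_mul (b i))
    (fun i => by simp [integral_const_mul, hcen i]) (fun i => (htail i).const_mul (b i))
    hvar (by linarith)).mono ?_
  unfold fukNagaevConst
  gcongr

theorem HasPowerTail.sum_mul_of_iIndepFun {X : ι → Ω → ℝ} {K α : ℝ}
    (hind : iIndepFun X μ) (hXm : ∀ i, AEStronglyMeasurable (X i) μ) (hcen : ∀ i, μ[X i] = 0)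
    (htail : ∀ i, HasPowerTail μ (X i) K α) (hK : 0 ≤ K) (hα : 2 < α) (a : ι → ℝ) :
    HasPowerTail μ (fun ω => ∑ i, a i * X i ω)
      (√(∑ i, a i ^ 2) ^ α * fukNagaevConst α (K ^ (2 / α) * (α / (α - 2))) K) α := by
  have ha2 : 0 ≤ ∑ i, a i ^ 2 := Finset.sum_nonneg fun i _ => sq_nonneg (a i)
  set r := √(∑ i, a i ^ 2)
  set b : ι → ℝ := fun i => a i / r
  have hb : ∑ i, b i ^ 2 ≤ 1 := by
    simp only [b, div_pow, ← Finset.sum_div, r, sq_sqrt ha2]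
    exact div_self_le_one _
  -- if `r = 0` then `b = 0` (junk value of `x / 0`), but also `a = 0`
  have hab : ∀ i, a i = r * b i := fun i => by
    rcases eq_or_ne r 0 with hr | hr
    · have : a i ^ 2 ≤ r ^ 2 := (sq_sqrt ha2).symm ▸
        Finset.single_le_sum (fun j _ => sq_nonneg (a j)) (Finset.mem_univ i)
      simp_all
    · exact (mul_div_cancel₀ _ hr).symm
  have hfun : (fun ω => ∑ i, a i * X i ω) = fun ω => r * ∑ i, b i * X i ω := by
    ext ω
    rw [Finset.mul_sum]
    exact Finset.sum_congr rfl fun i _ => by rw [hab i, mul_assoc]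
  rw [hfun]
  convert (sum_mul_of_iIndepFun_of_sum_sq_le_one hind hXm hcen htail hK hα hb).const_mul r
    using 3
  exact (abs_of_nonneg (sqrt_nonneg _)).symm

end PowerTail

/-- Moment bound for linear forms in independent centered heavy-tailed random variables:
there is C_α depending only on α such that for p ∈ [2,α),
‖∑ aᵢ Xᵢ‖_{L^p} ≤ C_α (∑ aᵢ²)^{1/2} (α/(α−p))^{1/p}. -/
theorem linear_form_moment_bound (α : ℝ) (hα : 2 < α) :
    ∃ C > 0, ∀ {Ω : Type} [MeasurableSpace Ω] (μ : Measure Ω), IsProbabilityMeasure μ →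
      ∀ (n : ℕ) (X : Fin n → Ω → ℝ), (∀ i, Measurable (X i)) →
        iIndepFun X μ →
        (∀ i, Integrable (X i) μ) → (∀ i, ∫ ω, X i ω ∂μ = 0) →
        (∀ i, ∀ t ≥ (1:ℝ), (μ {ω | t ≤ |X i ω|}).toReal ≤ t ^ (-α)) →
        ∀ (a : Fin n → ℝ), ∀ p ∈ Set.Ico (2 : ℝ) α,
          (∫⁻ ω, ENNReal.ofReal (|∑ i, a i * X i ω| ^ p) ∂μ) ^ (1 / p)
            ≤ ENNReal.ofReal (C * (∑ i, a i ^ 2) ^ ((1:ℝ)/2) * (α / (α - p)) ^ (1 / p)) := by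
  have hα0 : 0 < α := by linarith
  set F := fukNagaevConst α (2 ^ (2 / α) * (α / (α - 2))) 2
  have hF : 0 < F := by unfold F fukNagaevConst; positivity
  refine ⟨F ^ (1 / α), by positivity, ?_⟩
  intro Ω _ μ _ n X hXm hind _ hcen htail a p ⟨hp2, hpα⟩
  have hX : ∀ i, HasPowerTail μ (X i) 2 α := fun i =>
    (HasPowerTail.of_forall_ge one_pos hα0.le zero_le_one fun t ht => by
      simpa [measureReal_def] using htail i t ht).mono (by norm_num)
  have hS := HasPowerTail.sum_mul_of_iIndepFun hind (fun i => (hXm i).aestronglyMeasurable)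
    hcen hX zero_le_two hα a
  refine (hS.lintegral_rpow_rpow_le (by fun_prop) (by linarith) hpα).trans_eq ?_
  rw [mul_rpow (by positivity) hF.le, ← rpow_mul (sqrt_nonneg _), mul_one_div_cancel hα0.ne',
    rpow_one, sqrt_eq_rpow]
  ring_nf
end
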